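/- arXiv:2501.04191 — 9 statements merged into one kernel-verified Lean document; each statement's English description precedes it below -/
import Mathlib

section
/- Let λ, μ be partitions of length 3 with the same size n, with λ₁ > μ₁, λ₃ > μ₃ + 1, and |λᵢ − μᵢ| ≥ 2 for all i. Then the point γ = (μ₁+1, n−μ₁−λ₃, λ₃−1) lies in the convex hull of λ, μ, and ι = (μ₁, n−μ₁−λ₃, λ₃). -/
/-- Let `λ, μ` be partitions of length 3 of the same size `n`, with `λ₁ > μ₁`, `λ₃ > μ₃ + 1`,
and `|λᵢ - μᵢ| ≥ 2` for all `i`.  Then `γ = (μ₁+1, n-μ₁-λ₃, λ₃-1)` lies in the convex hull of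
`λ`, `μ` and `ι = (μ₁, n-μ₁-λ₃, λ₃)`. -/
theorem stmt_3 (l1 l2 l3 m1 m2 m3 n : ℤ)
    (hl : l1 ≥ l2 ∧ l2 ≥ l3 ∧ l3 ≥ 0) (hm : m1 ≥ m2 ∧ m2 ≥ m3 ∧ m3 ≥ 0)
    (hln : l1 + l2 + l3 = n) (hmn : m1 + m2 + m3 = n)
    (h1 : l1 > m1) (h3 : l3 > m3 + 1)
    (hd1 : |l1 - m1| ≥ 2) (hd2 : |l2 - m2| ≥ 2) (hd3 : |l3 - m3| ≥ 2) :
    (![(m1 : ℝ) + 1, n - m1 - l3, l3 - 1] : Fin 3 → ℝ) ∈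
      convexHull ℝ
        ({![(l1 : ℝ), l2, l3], ![(m1 : ℝ), m2, m3], ![(m1 : ℝ), n - m1 - l3, l3]} :
          Set (Fin 3 → ℝ)) := by
  have h1' : (2 : ℝ) ≤ (l1 : ℝ) - m1 := by
    have : (2 : ℤ) ≤ l1 - m1 := by rw [abs_of_pos (by omega)] at hd1; omega
    exact_mod_cast this
  have h3' : (2 : ℝ) ≤ (l3 : ℝ) - m3 := by
    have : (2 : ℤ) ≤ l3 - m3 := by omega
    exact_mod_cast this
  set a : ℝ := 1 / ((l1 : ℝ) - m1) with ha
  set b : ℝ := 1 / ((l3 : ℝ) - m3) with hb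
  have hane : (l1 : ℝ) - m1 ≠ 0 := by linarith
  have hbne : (l3 : ℝ) - m3 ≠ 0 := by linarith
  have ha0 : 0 ≤ a := by positivity
  have hb0 : 0 ≤ b := by positivity
  have hahalf : a ≤ 1/2 := by
    rw [ha, div_le_div_iff₀ (by linarith) (by norm_num)]; linarith
  have hbhalf : b ≤ 1/2 := by
    rw [hb, div_le_div_iff₀ (by linarith) (by norm_num)]; linarith
  have hc0 : 0 ≤ 1 - a - b := by linarith
  have key : (![(m1 : ℝ) + 1, n - m1 - l3, l3 - 1] : Fin 3 → ℝ)
      = a • (![(l1 : ℝ), l2, l3] : Fin 3 → ℝ) + b • ![(m1 : ℝ), m2, m3]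
        + (1 - a - b) • ![(m1 : ℝ), n - m1 - l3, l3] := by
    have haa : a * ((l1 : ℝ) - m1) = 1 := by rw [ha, one_div, inv_mul_cancel₀ hane]
    have hbb : b * ((l3 : ℝ) - m3) = 1 := by rw [hb, one_div, inv_mul_cancel₀ hbne]
    have hln' : (l1 : ℝ) + l2 + l3 = n := by exact_mod_cast hln
    have hmn' : (m1 : ℝ) + m2 + m3 = n := by exact_mod_cast hmn
    funext i
    fin_cases i
    · show (m1 : ℝ) + 1 = a * l1 + b * m1 + (1 - a - b) * m1
      nlinarith [haa, hbb]
    · show (n : ℝ) - m1 - l3 = a * l2 + b * m2 + (1 - a - b) * (n - m1 - l3)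
      nlinarith [haa, hbb]
    · show (l3 : ℝ) - 1 = a * l3 + b * m3 + (1 - a - b) * l3
      nlinarith [haa, hbb]
  rw [key]
  have hconv := convex_convexHull ℝ
    ({![(l1 : ℝ), l2, l3], ![(m1 : ℝ), m2, m3], ![(m1 : ℝ), n - m1 - l3, l3]} :
      Set (Fin 3 → ℝ))
  have hsum : ∑ i : Fin 3, (![a, b, 1 - a - b] : Fin 3 → ℝ) i
      • (![![(l1 : ℝ), l2, l3], ![(m1 : ℝ), m2, m3], ![(m1 : ℝ), n - m1 - l3, l3]]
        : Fin 3 → Fin 3 → ℝ) i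
      = a • (![(l1 : ℝ), l2, l3] : Fin 3 → ℝ) + b • ![(m1 : ℝ), m2, m3]
        + (1 - a - b) • ![(m1 : ℝ), n - m1 - l3, l3] := by
    simp [Fin.sum_univ_three, add_assoc]
  rw [← hsum]
  refine hconv.sum_mem (fun i _ => ?_) (by simp [Fin.sum_univ_three]) (fun i _ => ?_)
  · fin_cases i
    · exact ha0
    · exact hb0
    · exact hc0
  · apply subset_convexHull
    fin_cases i
    · exact Or.inl rfl
    · exact Or.inr (Or.inl rfl)
    · exact Or.inr (Or.inr rfl)
end

section
/- Let λ, μ be partitions of length 3 of the same size n that are incomparable in dominance order and such that the only dominance-maximal partition lattice points of the convex hull P of all permutations of λ and μ are λ and μ themselves. Then there exists i ∈ {1,2,3} with |λᵢ − μᵢ| = 1. -/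
set_option maxHeartbeats 1000000

/-- The set of all coordinate permutations of a vector `v : Fin 3 → ℝ`. -/
def perms (v : Fin 3 → ℝ) : Set (Fin 3 → ℝ) :=
  {w | ∃ π : Equiv.Perm (Fin 3), w = v ∘ π}

/-- The cast of an integer vector to a real vector. -/
def castV (p : Fin 3 → ℤ) : Fin 3 → ℝ := fun i => (p i : ℝ)

/-- `p` is a partition of length 3: weakly decreasing with nonnegative entries. -/
def IsPartition3 (p : Fin 3 → ℤ) : Prop :=
  p 0 ≥ p 1 ∧ p 1 ≥ p 2 ∧ p 2 ≥ 0

/-- Dominance order (for partitions of the same size): `Dom p q` means `p ⊴ q`. -/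
def Dom (p q : Fin 3 → ℤ) : Prop :=
  p 0 ≤ q 0 ∧ p 0 + p 1 ≤ q 0 + q 1

/-- `p` is a partition lattice point of `P`. -/
def IsPLP (P : Set (Fin 3 → ℝ)) (p : Fin 3 → ℤ) : Prop :=
  IsPartition3 p ∧ castV p ∈ P

/-- `p` is a dominance-maximal partition lattice point of `P`: no other partition lattice
point of `P` strictly dominates it. -/
def IsMaxPLP (P : Set (Fin 3 → ℝ)) (p : Fin 3 → ℤ) : Prop :=
  IsPLP P p ∧ ∀ q : Fin 3 → ℤ, IsPLP P q → Dom p q → q = p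

lemma part_le0 {p : Fin 3 → ℤ} (hp : IsPartition3 p) (i : Fin 3) : p i ≤ p 0 := by
  obtain ⟨h1, h2, h3⟩ := hp
  fin_cases i <;> simp <;> omega

lemma part_pair {p : Fin 3 → ℤ} (hp : IsPartition3 p) {i j : Fin 3} (h : i ≠ j) :
    p i + p j ≤ p 0 + p 1 := by
  obtain ⟨h1, h2, h3⟩ := hp
  fin_cases i <;> fin_cases j <;> simp_all <;> omega

lemma perm_sum (p : Fin 3 → ℤ) (π : Equiv.Perm (Fin 3)) :
    p (π 0) + p (π 1) + p (π 2) = p 0 + p 1 + p 2 := by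
  have := Equiv.sum_comp π p
  simpa [Fin.sum_univ_three] using this

lemma hull_bound {S : Set (Fin 3 → ℝ)} {c0 c1 c2 r : ℝ}
    (h : ∀ z ∈ S, c0 * z 0 + c1 * z 1 + c2 * z 2 ≤ r) :
    ∀ x ∈ convexHull ℝ S, c0 * x 0 + c1 * x 1 + c2 * x 2 ≤ r := by
  have hconv : Convex ℝ {x : Fin 3 → ℝ | c0 * x 0 + c1 * x 1 + c2 * x 2 ≤ r} := by
    intro x hx y hy α β hα hβ hαβ
    simp only [Set.mem_setOf_eq, Pi.add_apply, Pi.smul_apply, smul_eq_mul] at *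
    have e : c0 * (α * x 0 + β * y 0) + c1 * (α * x 1 + β * y 1) + c2 * (α * x 2 + β * y 2)
        = α * (c0 * x 0 + c1 * x 1 + c2 * x 2) + β * (c0 * y 0 + c1 * y 1 + c2 * y 2) := by
      ring
    rw [e]
    calc α * (c0 * x 0 + c1 * x 1 + c2 * x 2) + β * (c0 * y 0 + c1 * y 1 + c2 * y 2)
        ≤ α * r + β * r :=
          add_le_add (mul_le_mul_of_nonneg_left hx hα) (mul_le_mul_of_nonneg_left hy hβ)
      _ = r := by rw [← add_mul, hαβ, one_mul]
  exact fun x hx => convexHull_min h hconv hx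

lemma self_mem_perms (v : Fin 3 → ℝ) : v ∈ perms v := ⟨1, by funext i; simp⟩

lemma seg_gen (v : Fin 3 → ℝ) (i j : Fin 3) (s : ℝ) (h2 : v j ≤ s) (h1 : s ≤ v i) :
    ∃ θ : ℝ, 0 ≤ θ ∧ θ ≤ 1 ∧ θ * (v i - v j) = s - v j := by
  rcases eq_or_lt_of_le (le_trans h2 h1) with he | hlt
  · exact ⟨1, zero_le_one, le_refl 1, by rw [← he]; linarith [le_antisymm h1 (he ▸ h2)]⟩
  · refine ⟨(s - v j)/(v i - v j), div_nonneg (by linarith) (by linarith), ?_, ?_⟩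
    · rw [div_le_one (by linarith)]; linarith
    · rw [div_mul_cancel₀ _ (by linarith : v i - v j ≠ 0)]

lemma seg12 (v : Fin 3 → ℝ) (s : ℝ) (h2 : v 2 ≤ s) (h1 : s ≤ v 1) :
    (![v 0, s, v 1 + v 2 - s]) ∈ convexHull ℝ (perms v) := by
  obtain ⟨θ, hθ0, hθ1, hkey⟩ := seg_gen v 1 2 s h2 h1
  have hv1 : v ∈ convexHull ℝ (perms v) := subset_convexHull ℝ _ (self_mem_perms v)
  have hv2 : (v ∘ Equiv.swap 1 2) ∈ convexHull ℝ (perms v) :=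
    subset_convexHull ℝ _ ⟨Equiv.swap 1 2, rfl⟩
  have hc := (convex_convexHull ℝ (perms v)) hv1 hv2 hθ0 (by linarith : (0:ℝ) ≤ 1 - θ)
    (by ring)
  have heq : (![v 0, s, v 1 + v 2 - s]) = θ • v + (1 - θ) • (v ∘ Equiv.swap 1 2) := by
    funext i
    fin_cases i <;>
      simp [Equiv.swap_apply_def, Pi.smul_apply, smul_eq_mul] <;>
      linarith [hkey]
  rw [heq]; exact hc

lemma seg01 (v : Fin 3 → ℝ) (s : ℝ) (h2 : v 1 ≤ s) (h1 : s ≤ v 0) :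
    (![s, v 0 + v 1 - s, v 2]) ∈ convexHull ℝ (perms v) := by
  obtain ⟨θ, hθ0, hθ1, hkey⟩ := seg_gen v 0 1 s h2 h1
  have hv1 : v ∈ convexHull ℝ (perms v) := subset_convexHull ℝ _ (self_mem_perms v)
  have hv2 : (v ∘ Equiv.swap 0 1) ∈ convexHull ℝ (perms v) :=
    subset_convexHull ℝ _ ⟨Equiv.swap 0 1, rfl⟩
  have hc := (convex_convexHull ℝ (perms v)) hv1 hv2 hθ0 (by linarith : (0:ℝ) ≤ 1 - θ)
    (by ring)
  have heq : (![s, v 0 + v 1 - s, v 2]) = θ • v + (1 - θ) • (v ∘ Equiv.swap 0 1) := by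
    funext i
    fin_cases i <;>
      simp [Equiv.swap_apply_def, Pi.smul_apply, smul_eq_mul] <;>
      linarith [hkey]
  rw [heq]; exact hc

lemma key_lemma (l m : Fin 3 → ℤ) (n : ℤ)
    (hl : IsPartition3 l) (hm : IsPartition3 m)
    (hln : l 0 + l 1 + l 2 = n) (hmn : m 0 + m 1 + m 2 = n)
    (h0 : m 0 < l 0) (h1 : l 0 + l 1 < m 0 + m 1)
    (hmax : ∀ p : Fin 3 → ℤ,
      IsMaxPLP (convexHull ℝ (perms (castV l) ∪ perms (castV m))) p ↔ (p = l ∨ p = m)) :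
    ∃ i : Fin 3, |l i - m i| = 1 := by
  obtain ⟨hl1, hl2, hl3⟩ := hl
  obtain ⟨hm1, hm2, hm3⟩ := hm
  set P := convexHull ℝ (perms (castV l) ∪ perms (castV m)) with hPdef
  -- trivial cases
  by_cases hA1 : l 0 - m 0 = 1
  · exact ⟨0, by rw [abs_of_pos (by omega)]; omega⟩
  by_cases hB1 : m 0 + m 1 - (l 0 + l 1) = 1
  · exact ⟨2, by rw [abs_of_pos (by omega)]; omega⟩
  exfalso
  have hA : 2 ≤ l 0 - m 0 := by omega
  have hB : 2 ≤ m 0 + m 1 - (l 0 + l 1) := by omega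
  -- bounds on partition lattice points of P
  have gen1 : ∀ z ∈ perms (castV l) ∪ perms (castV m),
      (1:ℝ) * z 0 + 0 * z 1 + 0 * z 2 ≤ ((l 0 : ℤ) : ℝ) := by
    rintro z (⟨π, rfl⟩ | ⟨π, rfl⟩) <;> simp [castV]
    · exact_mod_cast part_le0 ⟨hl1, hl2, hl3⟩ (π 0)
    · exact_mod_cast (by have := part_le0 ⟨hm1, hm2, hm3⟩ (π 0); omega : m (π 0) ≤ l 0)
  have gen2 : ∀ z ∈ perms (castV l) ∪ perms (castV m),
      (1:ℝ) * z 0 + 1 * z 1 + 0 * z 2 ≤ ((m 0 + m 1 : ℤ) : ℝ) := by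
    rintro z (⟨π, rfl⟩ | ⟨π, rfl⟩) <;> simp [castV]
    · have hne : π 0 ≠ π 1 := fun h => absurd (π.injective h) (by decide)
      exact_mod_cast (by have := part_pair ⟨hl1, hl2, hl3⟩ hne; omega :
        l (π 0) + l (π 1) ≤ m 0 + m 1)
    · have hne : π 0 ≠ π 1 := fun h => absurd (π.injective h) (by decide)
      exact_mod_cast (part_pair ⟨hm1, hm2, hm3⟩ hne)
  have gen3 : ∀ z ∈ perms (castV l) ∪ perms (castV m),
      (1:ℝ) * z 0 + 1 * z 1 + 1 * z 2 ≤ ((n : ℤ) : ℝ) := by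
    rintro z (⟨π, rfl⟩ | ⟨π, rfl⟩) <;> simp [castV]
    · have hps : ((l (π 0) : ℝ)) + l (π 1) + l (π 2) = (l 0 : ℝ) + l 1 + l 2 := by
        exact_mod_cast perm_sum l π
      have hr : (l 0 : ℝ) + l 1 + l 2 = (n : ℝ) := by exact_mod_cast hln
      linarith
    · have hps : ((m (π 0) : ℝ)) + m (π 1) + m (π 2) = (m 0 : ℝ) + m 1 + m 2 := by
        exact_mod_cast perm_sum m π
      have hr : (m 0 : ℝ) + m 1 + m 2 = (n : ℝ) := by exact_mod_cast hmn
      linarith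
  have gen4 : ∀ z ∈ perms (castV l) ∪ perms (castV m),
      (-1:ℝ) * z 0 + (-1) * z 1 + (-1) * z 2 ≤ ((-n : ℤ) : ℝ) := by
    rintro z (⟨π, rfl⟩ | ⟨π, rfl⟩) <;> simp [castV]
    · have hps : ((l (π 0) : ℝ)) + l (π 1) + l (π 2) = (l 0 : ℝ) + l 1 + l 2 := by
        exact_mod_cast perm_sum l π
      have hr : (l 0 : ℝ) + l 1 + l 2 = (n : ℝ) := by exact_mod_cast hln
      linarith
    · have hps : ((m (π 0) : ℝ)) + m (π 1) + m (π 2) = (m 0 : ℝ) + m 1 + m 2 := by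
        exact_mod_cast perm_sum m π
      have hr : (m 0 : ℝ) + m 1 + m 2 = (n : ℝ) := by exact_mod_cast hmn
      linarith
  have qprops : ∀ q : Fin 3 → ℤ, IsPLP P q →
      q 0 ≤ l 0 ∧ q 0 + q 1 ≤ m 0 + m 1 ∧ q 0 + q 1 + q 2 = n := by
    rintro q ⟨hq1, hq2⟩
    have b1 := hull_bound gen1 _ hq2
    have b2 := hull_bound gen2 _ hq2
    have b3 := hull_bound gen3 _ hq2
    have b4 := hull_bound gen4 _ hq2
    simp only [castV] at b1 b2 b3 b4
    push_cast at b1 b2 b3 b4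
    refine ⟨by exact_mod_cast (by linarith : ((q 0 : ℤ) : ℝ) ≤ ((l 0 : ℤ) : ℝ)), ?_, ?_⟩
    · exact_mod_cast (by push_cast; linarith : ((q 0 + q 1 : ℤ) : ℝ) ≤ ((m 0 + m 1 : ℤ) : ℝ))
    · exact_mod_cast (by push_cast; linarith : ((q 0 + q 1 + q 2 : ℤ) : ℝ) = ((n : ℤ) : ℝ))
  -- every PLP is dominated by a maximal PLP
  have exmax : ∀ N : ℕ, ∀ q : Fin 3 → ℤ, IsPLP P q →
      l 0 - q 0 + (m 0 + m 1 - (q 0 + q 1)) ≤ (N : ℤ) →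
      ∃ r, IsMaxPLP P r ∧ Dom q r := by
    intro N
    induction N with
    | zero =>
      intro q hq hqN
      by_cases hmq : IsMaxPLP P q
      · exact ⟨q, hmq, le_refl _, le_refl _⟩
      · exfalso
        have h' : ¬ ∀ q', IsPLP P q' → Dom q q' → q' = q := fun h => hmq ⟨hq, h⟩
        push_neg at h'
        obtain ⟨q', hq', hdom, hne⟩ := h'
        obtain ⟨c1, c2, c3⟩ := qprops q hq
        obtain ⟨d1, d2, d3⟩ := qprops q' hq'
        obtain ⟨hd1, hd2⟩ := hdom
        have hne2 : ¬(q' 0 = q 0 ∧ q' 1 = q 1) := by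
          rintro ⟨e0, e1⟩
          apply hne; funext i; fin_cases i
          · show q' 0 = q 0; omega
          · show q' 1 = q 1; omega
          · show q' 2 = q 2; omega
        omega
    | succ N IH =>
      intro q hq hqN
      by_cases hmq : IsMaxPLP P q
      · exact ⟨q, hmq, le_refl _, le_refl _⟩
      · have h' : ¬ ∀ q', IsPLP P q' → Dom q q' → q' = q := fun h => hmq ⟨hq, h⟩
        push_neg at h'
        obtain ⟨q', hq', hdom, hne⟩ := h'
        obtain ⟨c1, c2, c3⟩ := qprops q hq
        obtain ⟨d1, d2, d3⟩ := qprops q' hq'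
        obtain ⟨hd1, hd2⟩ := hdom
        have hne2 : ¬(q' 0 = q 0 ∧ q' 1 = q 1) := by
          rintro ⟨e0, e1⟩
          apply hne; funext i; fin_cases i
          · show q' 0 = q 0; omega
          · show q' 1 = q 1; omega
          · show q' 2 = q 2; omega
        have hmeas : l 0 - q' 0 + (m 0 + m 1 - (q' 0 + q' 1)) ≤ (N : ℤ) := by
          push_cast at hqN ⊢; omega
        obtain ⟨r, hr, hdr⟩ := IH q' hq' hmeas
        exact ⟨r, hr, le_trans hd1 hdr.1, le_trans hd2 hdr.2⟩
  -- useful real facts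
  have hsumR : (m 0 : ℝ) + m 1 + m 2 = (l 0 : ℝ) + l 1 + l 2 := by
    exact_mod_cast (by omega : m 0 + m 1 + m 2 = l 0 + l 1 + l 2)
  -- construct the bad partition lattice point p
  have hbad : ∃ p : Fin 3 → ℤ, IsPLP P p ∧ m 0 < p 0 ∧ l 0 + l 1 < p 0 + p 1 := by
    rcases le_or_gt (l 0 - m 0) (m 0 + m 1 - (l 0 + l 1)) with hab | hab
    · -- case A ≤ B : p = (l0 - 1, l1 + 2, l2 - 1)
      refine ⟨![l 0 - 1, l 1 + 2, l 2 - 1], ⟨?_, ?_⟩, ?_, ?_⟩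
      · refine ⟨?_, ?_, ?_⟩ <;> simp <;> omega
      · -- membership
        have hs2 : castV m 2 ≤ ((l 1 + 2 * (l 0 - m 0) : ℤ) : ℝ) := by
          simp only [castV]; exact_mod_cast (by omega : m 2 ≤ l 1 + 2 * (l 0 - m 0))
        have hs1 : ((l 1 + 2 * (l 0 - m 0) : ℤ) : ℝ) ≤ castV m 1 := by
          simp only [castV]; exact_mod_cast (by omega : l 1 + 2 * (l 0 - m 0) ≤ m 1)
        have hy := seg12 (castV m) ((l 1 + 2 * (l 0 - m 0) : ℤ) : ℝ) hs2 hs1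
        have hyP : (![castV m 0, ((l 1 + 2 * (l 0 - m 0) : ℤ) : ℝ),
            castV m 1 + castV m 2 - ((l 1 + 2 * (l 0 - m 0) : ℤ) : ℝ)]) ∈ P :=
          convexHull_mono Set.subset_union_right hy
        have hlP : castV l ∈ P := subset_convexHull ℝ _ (Or.inl (self_mem_perms _))
        have hD : (0:ℝ) < (l 0 : ℝ) - (m 0 : ℝ) := by
          have : (m 0 : ℝ) < (l 0 : ℝ) := by exact_mod_cast h0
          linarith
        obtain ⟨β, hβ0, hβ1, hβkey⟩ : ∃ β : ℝ, 0 ≤ β ∧ β ≤ 1 ∧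
            β * ((l 0 : ℝ) - (m 0 : ℝ)) = 1 := by
          refine ⟨1 / ((l 0 : ℝ) - (m 0 : ℝ)), by positivity, ?_, ?_⟩
          · rw [div_le_one hD]
            have h2' : (m 0 : ℝ) + 2 ≤ (l 0 : ℝ) := by
              exact_mod_cast (by omega : m 0 + 2 ≤ l 0)
            linarith
          · rw [one_div, inv_mul_cancel₀ (ne_of_gt hD)]
        have hc := (convex_convexHull ℝ (perms (castV l) ∪ perms (castV m))) hlP hyP
          (by linarith : (0:ℝ) ≤ 1 - β) hβ0 (by ring)
        have heq : castV (![l 0 - 1, l 1 + 2, l 2 - 1]) =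
            (1 - β) • castV l + β • (![castV m 0, ((l 1 + 2 * (l 0 - m 0) : ℤ) : ℝ),
              castV m 1 + castV m 2 - ((l 1 + 2 * (l 0 - m 0) : ℤ) : ℝ)]) := by
          funext i
          fin_cases i <;>
            simp [castV, Pi.smul_apply, smul_eq_mul] <;> push_cast <;>
            first
              | linear_combination hβkey
              | linear_combination -hβkey
              | linear_combination (2:ℝ) * hβkey
              | linear_combination (-2:ℝ) * hβkey
              | linear_combination hβkey - β * hsumR
              | linear_combination hβkey + β * hsumR
              | linear_combination -hβkey + β * hsumR
              | linear_combination -hβkey - β * hsumR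
        rw [heq, hPdef]; exact hc
      · simp only [Matrix.cons_val_zero]; omega
      · simp only [Matrix.cons_val_zero, Matrix.cons_val_one, Matrix.head_cons]; omega
    · -- case B < A : p = (m0 + 1, m1 - 2, m2 + 1)
      refine ⟨![m 0 + 1, m 1 - 2, m 2 + 1], ⟨?_, ?_⟩, ?_, ?_⟩
      · refine ⟨?_, ?_, ?_⟩ <;> simp <;> omega
      · have hs2 : castV l 1 ≤ ((m 0 + (m 0 + m 1 - l 0 - l 1) : ℤ) : ℝ) := by
          simp only [castV]; exact_mod_cast (by omega : l 1 ≤ m 0 + (m 0 + m 1 - l 0 - l 1))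
        have hs1 : ((m 0 + (m 0 + m 1 - l 0 - l 1) : ℤ) : ℝ) ≤ castV l 0 := by
          simp only [castV]; exact_mod_cast (by omega : m 0 + (m 0 + m 1 - l 0 - l 1) ≤ l 0)
        have hy := seg01 (castV l) ((m 0 + (m 0 + m 1 - l 0 - l 1) : ℤ) : ℝ) hs2 hs1
        have hyP : (![((m 0 + (m 0 + m 1 - l 0 - l 1) : ℤ) : ℝ),
            castV l 0 + castV l 1 - ((m 0 + (m 0 + m 1 - l 0 - l 1) : ℤ) : ℝ),
            castV l 2]) ∈ P :=
          convexHull_mono Set.subset_union_left hy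
        have hmP : castV m ∈ P := subset_convexHull ℝ _ (Or.inr (self_mem_perms _))
        have hD : (0:ℝ) < (m 0 : ℝ) + (m 1 : ℝ) - (l 0 : ℝ) - (l 1 : ℝ) := by
          have : (l 0 : ℝ) + (l 1 : ℝ) < (m 0 : ℝ) + (m 1 : ℝ) := by
            exact_mod_cast (by omega : l 0 + l 1 < m 0 + m 1)
          linarith
        obtain ⟨β, hβ0, hβ1, hβkey⟩ : ∃ β : ℝ, 0 ≤ β ∧ β ≤ 1 ∧
            β * ((m 0 : ℝ) + (m 1 : ℝ) - (l 0 : ℝ) - (l 1 : ℝ)) = 1 := by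
          refine ⟨1 / ((m 0 : ℝ) + (m 1 : ℝ) - (l 0 : ℝ) - (l 1 : ℝ)), by positivity, ?_, ?_⟩
          · rw [div_le_one hD]
            have h2' : (l 0 : ℝ) + (l 1 : ℝ) + 2 ≤ (m 0 : ℝ) + (m 1 : ℝ) := by
              exact_mod_cast (by omega : l 0 + l 1 + 2 ≤ m 0 + m 1)
            linarith
          · rw [one_div, inv_mul_cancel₀ (ne_of_gt hD)]
        have hc := (convex_convexHull ℝ (perms (castV l) ∪ perms (castV m))) hmP hyP
          (by linarith : (0:ℝ) ≤ 1 - β) hβ0 (by ring)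
        have heq : castV (![m 0 + 1, m 1 - 2, m 2 + 1]) =
            (1 - β) • castV m + β • (![((m 0 + (m 0 + m 1 - l 0 - l 1) : ℤ) : ℝ),
              castV l 0 + castV l 1 - ((m 0 + (m 0 + m 1 - l 0 - l 1) : ℤ) : ℝ),
              castV l 2]) := by
          funext i
          fin_cases i <;>
            simp [castV, Pi.smul_apply, smul_eq_mul] <;> push_cast <;>
            first
              | linear_combination hβkey
              | linear_combination -hβkey
              | linear_combination (2:ℝ) * hβkey
              | linear_combination (-2:ℝ) * hβkey
              | linear_combination hβkey - β * hsumR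
              | linear_combination hβkey + β * hsumR
              | linear_combination -hβkey + β * hsumR
              | linear_combination -hβkey - β * hsumR
        rw [heq, hPdef]; exact hc
      · simp only [Matrix.cons_val_zero]; omega
      · simp only [Matrix.cons_val_zero, Matrix.cons_val_one, Matrix.head_cons]; omega
  obtain ⟨p, hpPLP, hp1, hp2⟩ := hbad
  obtain ⟨r, hrmax, hdr⟩ := exmax (l 0 - p 0 + (m 0 + m 1 - (p 0 + p 1))).toNat p hpPLP
    (Int.self_le_toNat _)
  obtain ⟨hd1, hd2⟩ := hdr
  rcases (hmax r).mp hrmax with rfl | rfl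
  · omega
  · omega

/-- If `λ, μ` are incomparable partitions of length 3 of the same size whose convex hull of
permutations `P` is 2-partition maximal (its dominance-maximal partition lattice points are
exactly `λ` and `μ`), then `|λᵢ - μᵢ| = 1` for some `i`. -/
theorem stmt_4 (l m : Fin 3 → ℤ) (n : ℤ)
    (hl : IsPartition3 l) (hm : IsPartition3 m)
    (hln : l 0 + l 1 + l 2 = n) (hmn : m 0 + m 1 + m 2 = n)
    (hinc : ¬Dom l m ∧ ¬Dom m l)
    (hmax : ∀ p : Fin 3 → ℤ,
      IsMaxPLP (convexHull ℝ (perms (castV l) ∪ perms (castV m))) p ↔ (p = l ∨ p = m)) :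
    ∃ i : Fin 3, |l i - m i| = 1 := by
  obtain ⟨hlm, hml⟩ := hinc
  unfold Dom at hlm hml
  push_neg at hlm hml
  rcases lt_or_ge (m 0) (l 0) with h0 | h0
  · exact key_lemma l m n hl hm hln hmn h0 (by omega : l 0 + l 1 < m 0 + m 1) hmax
  · have h0' : l 0 < m 0 := by
      rcases lt_or_eq_of_le h0 with h | h
      · exact h
      · omega
    have hmax' : ∀ p : Fin 3 → ℤ,
        IsMaxPLP (convexHull ℝ (perms (castV m) ∪ perms (castV l))) p ↔ (p = m ∨ p = l) := by
      intro p
      rw [Set.union_comm]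
      exact (hmax p).trans or_comm
    obtain ⟨i, hi⟩ := key_lemma m l n hm hl hmn hln h0' (by omega : m 0 + m 1 < l 0 + l 1) hmax'
    exact ⟨i, by rw [abs_sub_comm]; exact hi⟩
end

section
/- Let λ, μ be partitions of length 3 of the same size n with λ₁ > μ₁ and λ₃ > μ₃. Then for every permutation (x,y,z) of λ and every permutation (x,y,z) of μ, the inequality (λ₃−μ₃)x − (λ₁−μ₁)z ≤ μ₁λ₃ − μ₃λ₁ holds; consequently this inequality holds for every point (x,y,z) in the convex hull P of all permutations of λ and μ. -/
lemma entry_bounds (a b c : ℝ) (hab : a ≥ b) (hbc : b ≥ c) (i : Fin 3) :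
    c ≤ ![a, b, c] i ∧ ![a, b, c] i ≤ a := by
  fin_cases i <;> simp <;> (try constructor) <;> linarith

/-- For partitions `λ, μ` of length 3 of equal size with `λ₁ > μ₁`, `λ₃ > μ₃`, the inequality
`(λ₃-μ₃)x - (λ₁-μ₁)z ≤ μ₁λ₃ - μ₃λ₁` holds for every permutation `(x,y,z)` of `λ` and of `μ`,
and consequently for every point of the convex hull of all such permutations. -/
theorem stmt_7 (l1 l2 l3 m1 m2 m3 n : ℝ)
    (hl : l1 ≥ l2 ∧ l2 ≥ l3 ∧ l3 ≥ 0) (hm : m1 ≥ m2 ∧ m2 ≥ m3 ∧ m3 ≥ 0)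
    (hln : l1 + l2 + l3 = n) (hmn : m1 + m2 + m3 = n)
    (h1 : l1 > m1) (h3 : l3 > m3) :
    (∀ v ∈ perms ![l1, l2, l3], (l3 - m3) * v 0 - (l1 - m1) * v 2 ≤ m1 * l3 - m3 * l1) ∧
      (∀ v ∈ perms ![m1, m2, m3], (l3 - m3) * v 0 - (l1 - m1) * v 2 ≤ m1 * l3 - m3 * l1) ∧
      (∀ v ∈ convexHull ℝ (perms ![l1, l2, l3] ∪ perms ![m1, m2, m3]),
        (l3 - m3) * v 0 - (l1 - m1) * v 2 ≤ m1 * l3 - m3 * l1) := by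
  obtain ⟨hl12, hl23, hl30⟩ := hl
  obtain ⟨hm12, hm23, hm30⟩ := hm
  have hL : ∀ v ∈ perms ![l1, l2, l3],
      (l3 - m3) * v 0 - (l1 - m1) * v 2 ≤ m1 * l3 - m3 * l1 := by
    rintro v ⟨π, rfl⟩
    obtain ⟨-, hx⟩ := entry_bounds l1 l2 l3 hl12 hl23 (π 0)
    obtain ⟨hz, -⟩ := entry_bounds l1 l2 l3 hl12 hl23 (π 2)
    simp only [Function.comp_apply]
    nlinarith [hx, hz]
  have hM : ∀ v ∈ perms ![m1, m2, m3],
      (l3 - m3) * v 0 - (l1 - m1) * v 2 ≤ m1 * l3 - m3 * l1 := by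
    rintro v ⟨π, rfl⟩
    obtain ⟨-, hx⟩ := entry_bounds m1 m2 m3 hm12 hm23 (π 0)
    obtain ⟨hz, -⟩ := entry_bounds m1 m2 m3 hm12 hm23 (π 2)
    simp only [Function.comp_apply]
    nlinarith [hx, hz]
  refine ⟨hL, hM, ?_⟩
  intro v hv
  have hconv : Convex ℝ {w : Fin 3 → ℝ |
      (l3 - m3) * w 0 - (l1 - m1) * w 2 ≤ m1 * l3 - m3 * l1} := by
    refine convex_halfSpace_le ⟨?_, ?_⟩ _
    · intro x y; simp; ring
    · intro c x; simp; ring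
  have hsub : perms ![l1, l2, l3] ∪ perms ![m1, m2, m3] ⊆ {w : Fin 3 → ℝ |
      (l3 - m3) * w 0 - (l1 - m1) * w 2 ≤ m1 * l3 - m3 * l1} := by
    rintro w (hw | hw)
    · exact hL w hw
    · exact hM w hw
  exact convexHull_min hsub hconv hv
end

section
/- Let λ, μ be partitions of length 3 of the same size n with λ₁ > μ₁ and λ₃ > μ₃, and let P be the convex hull of all permutations of λ and μ. If (x,y,z) ∈ P with x ≥ y ≥ z, and (x,y,z) lies in neither the permutohedron of λ nor the permutohedron of μ, then μ₁ < x, z < λ₃, and (λ₃−μ₃)x − (λ₁−μ₁)z ≤ μ₁λ₃ − μ₃λ₁; i.e., (x,y,z) lies in the convex hull of λ, μ, and ι = (μ₁, n−μ₁−λ₃, λ₃). -/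
/-- The permutohedron of `v`: the convex hull of all coordinate permutations of `v`. -/
def permutohedron (v : Fin 3 → ℝ) : Set (Fin 3 → ℝ) :=
  convexHull ℝ (perms v)

lemma mix (a b p q : ℝ) (hpq : p + q = a + b) (hbp : b ≤ p) (hpa : p ≤ a) :
    ∃ t, 0 ≤ t ∧ t ≤ 1 ∧ p = t*a + (1-t)*b ∧ q = t*b + (1-t)*a := by
  rcases eq_or_lt_of_le (hbp.trans hpa) with h | h
  · exact ⟨1, by norm_num, by norm_num, by linarith, by linarith⟩
  · have ht : (p - b)/(a - b)*(a - b) = p - b := div_mul_cancel₀ _ (by linarith)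
    refine ⟨(p - b)/(a - b), div_nonneg (by linarith) (by linarith), ?_, ?_, ?_⟩
    · rw [div_le_one (by linarith)]; linarith
    · linear_combination -ht
    · linear_combination ht + hpq

lemma perm_mem (a b c : ℝ) (π : Equiv.Perm (Fin 3)) :
    (![a,b,c] ∘ π) ∈ perms ![a,b,c] := ⟨π, rfl⟩

lemma swap01_mem (a b c : ℝ) : ![b,a,c] ∈ perms ![a,b,c] := by
  have := perm_mem a b c (Equiv.swap 0 1)
  convert this using 1
  funext i; fin_cases i <;> simp [Equiv.swap_apply_def] <;> rfl

lemma swap12_mem (a b c : ℝ) : ![a,c,b] ∈ perms ![a,b,c] := by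
  have := perm_mem a b c (Equiv.swap 1 2)
  convert this using 1
  funext i; fin_cases i <;> simp [Equiv.swap_apply_def] <;> rfl

lemma swap02_mem (a b c : ℝ) : ![c,b,a] ∈ perms ![a,b,c] := by
  have := perm_mem a b c (Equiv.swap 0 2)
  convert this using 1
  funext i; fin_cases i <;> simp [Equiv.swap_apply_def] <;> rfl

lemma cyc1_mem (a b c : ℝ) : ![b,c,a] ∈ perms ![a,b,c] := by
  have := perm_mem a b c (Equiv.swap 0 1 * Equiv.swap 1 2)
  convert this using 1
  funext i; fin_cases i <;> simp [Equiv.swap_apply_def] <;> rfl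

lemma cyc2_mem (a b c : ℝ) : ![c,a,b] ∈ perms ![a,b,c] := by
  have := perm_mem a b c (Equiv.swap 1 2 * Equiv.swap 0 1)
  convert this using 1
  funext i; fin_cases i <;> simp [Equiv.swap_apply_def] <;> rfl

lemma id_mem (a b c : ℝ) : ![a,b,c] ∈ perms ![a,b,c] := ⟨1, rfl⟩

lemma combo_mem {S : Set (Fin 3 → ℝ)} {x y v : Fin 3 → ℝ} (hx : x ∈ convexHull ℝ S)
    (hy : y ∈ convexHull ℝ S) {t : ℝ} (ht0 : 0 ≤ t) (ht1 : t ≤ 1)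
    (hv : ∀ i, v i = t * x i + (1-t) * y i) : v ∈ convexHull ℝ S := by
  have h := (convex_convexHull ℝ S) hx hy ht0 (by linarith) (by ring : t + (1-t) = 1)
  convert h using 1
  funext i
  simpa using hv i

lemma rado (a1 a2 a3 : ℝ) (h12 : a2 ≤ a1) (h23 : a3 ≤ a2) (v : Fin 3 → ℝ)
    (hd0 : v 1 ≤ v 0) (hd1 : v 2 ≤ v 1)
    (hsum : v 0 + v 1 + v 2 = a1 + a2 + a3)
    (hub : v 0 ≤ a1) (hlb : a3 ≤ v 2) :
    v ∈ permutohedron ![a1,a2,a3] := by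
  show v ∈ convexHull ℝ (perms ![a1,a2,a3])
  have hsub := subset_convexHull ℝ (perms ![a1,a2,a3])
  by_cases hcase : a2 ≤ v 0
  · obtain ⟨t, ht0, ht1, hp, hq⟩ := mix a1 a2 (v 0) (a1+a2-v 0) (by ring) hcase hub
    have hu : ![v 0, a1+a2-v 0, a3] ∈ convexHull ℝ (perms ![a1,a2,a3]) :=
      combo_mem (hsub (id_mem a1 a2 a3)) (hsub (swap01_mem a1 a2 a3)) ht0 ht1
        (by intro i; fin_cases i <;> simp <;> first | linarith | ring)
    have hw : ![v 0, a3, a1+a2-v 0] ∈ convexHull ℝ (perms ![a1,a2,a3]) :=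
      combo_mem (hsub (swap12_mem a1 a2 a3)) (hsub (cyc1_mem a1 a2 a3)) ht0 ht1
        (by intro i; fin_cases i <;> simp <;> first | linarith | ring)
    obtain ⟨s, hs0, hs1, hp', hq'⟩ := mix (a1+a2-v 0) a3 (v 1) (v 2)
      (by linarith) (by linarith) (by linarith)
    exact combo_mem hu hw hs0 hs1
      (by intro i; fin_cases i <;> simp <;> first | linarith | ring)
  · push_neg at hcase
    have hv0a3 : a3 ≤ v 0 := by linarith
    obtain ⟨t, ht0, ht1, hp, hq⟩ := mix a1 a3 (v 0) (a1+a3-v 0) (by ring) hv0a3 hub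
    have hu : ![v 0, a2, a1+a3-v 0] ∈ convexHull ℝ (perms ![a1,a2,a3]) :=
      combo_mem (hsub (id_mem a1 a2 a3)) (hsub (swap02_mem a1 a2 a3)) ht0 ht1
        (by intro i; fin_cases i <;> simp <;> first | linarith | ring)
    have hw : ![v 0, a1+a3-v 0, a2] ∈ convexHull ℝ (perms ![a1,a2,a3]) :=
      combo_mem (hsub (swap12_mem a1 a2 a3)) (hsub (cyc2_mem a1 a2 a3)) ht0 ht1
        (by intro i; fin_cases i <;> simp <;> first | linarith | ring)
    obtain ⟨s, hs0, hs1, hp', hq'⟩ := mix a2 (a1+a3-v 0) (v 1) (v 2)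
      (by linarith) (by linarith) (by linarith)
    exact combo_mem hu hw hs0 hs1
      (by intro i; fin_cases i <;> simp <;> first | linarith | ring)

set_option maxHeartbeats 1000000 in
/-- For partitions `λ, μ` of length 3 of equal size `n` with `λ₁ > μ₁`, `λ₃ > μ₃`, any weakly
decreasing point of the convex hull `P` of all permutations of `λ` and `μ` lying in neither
permutohedron satisfies `μ₁ < x`, `z < λ₃` and `(λ₃-μ₃)x - (λ₁-μ₁)z ≤ μ₁λ₃ - μ₃λ₁`; i.e. it
lies in the convex hull of `λ`, `μ` and `ι = (μ₁, n-μ₁-λ₃, λ₃)`. -/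
theorem stmt_9 (l1 l2 l3 m1 m2 m3 n : ℝ)
    (hl : l1 ≥ l2 ∧ l2 ≥ l3 ∧ l3 ≥ 0) (hm : m1 ≥ m2 ∧ m2 ≥ m3 ∧ m3 ≥ 0)
    (hln : l1 + l2 + l3 = n) (hmn : m1 + m2 + m3 = n)
    (h1 : l1 > m1) (h3 : l3 > m3)
    (v : Fin 3 → ℝ)
    (hv : v ∈ convexHull ℝ (perms ![l1, l2, l3] ∪ perms ![m1, m2, m3]))
    (hdec : v 0 ≥ v 1 ∧ v 1 ≥ v 2)
    (hnl : v ∉ permutohedron ![l1, l2, l3]) (hnm : v ∉ permutohedron ![m1, m2, m3]) :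
    m1 < v 0 ∧ v 2 < l3 ∧
      (l3 - m3) * v 0 - (l1 - m1) * v 2 ≤ m1 * l3 - m3 * l1 ∧
      v ∈ convexHull ℝ
        ({![l1, l2, l3], ![m1, m2, m3], ![m1, n - m1 - l3, l3]} : Set (Fin 3 → ℝ)) := by
  obtain ⟨hl12, hl23, hl3⟩ := hl
  obtain ⟨hm12, hm23, hm3⟩ := hm
  obtain ⟨hd01, hd12⟩ := hdec
  -- the enclosing convex region K
  set K : Set (Fin 3 → ℝ) := {w | w 0 + w 1 + w 2 = n ∧ (∀ i, m3 ≤ w i ∧ w i ≤ l1) ∧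
      (l3 - m3) * w 0 - (l1 - m1) * w 2 ≤ m1 * l3 - m3 * l1} with hKdef
  have hKconv : Convex ℝ K := by
    intro x hx y hy a b ha hb hab
    obtain ⟨hx1, hx2, hx3⟩ := hx
    obtain ⟨hy1, hy2, hy3⟩ := hy
    refine ⟨?_, ?_, ?_⟩
    · simp only [Pi.add_apply, Pi.smul_apply, smul_eq_mul]
      linear_combination a * hx1 + b * hy1 + n * hab
    · intro i
      have h1x := hx2 i; have h1y := hy2 i
      simp only [Pi.add_apply, Pi.smul_apply, smul_eq_mul]
      constructor
      · nlinarith [mul_le_mul_of_nonneg_left h1x.1 ha, mul_le_mul_of_nonneg_left h1y.1 hb]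
      · nlinarith [mul_le_mul_of_nonneg_left h1x.2 ha, mul_le_mul_of_nonneg_left h1y.2 hb]
    · simp only [Pi.add_apply, Pi.smul_apply, smul_eq_mul]
      have key := add_le_add (mul_le_mul_of_nonneg_left hx3 ha) (mul_le_mul_of_nonneg_left hy3 hb)
      have hC : (a+b)*(m1*l3 - m3*l1) = m1*l3 - m3*l1 := by rw [hab]; ring
      nlinarith [key, hC]
  have hboxl : ∀ j : Fin 3, l3 ≤ ![l1,l2,l3] j ∧ ![l1,l2,l3] j ≤ l1 := by
    intro j; fin_cases j <;> exact ⟨by norm_num; try linarith, by norm_num; try linarith⟩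
  have hboxm : ∀ j : Fin 3, m3 ≤ ![m1,m2,m3] j ∧ ![m1,m2,m3] j ≤ m1 := by
    intro j; fin_cases j <;> exact ⟨by norm_num; try linarith, by norm_num; try linarith⟩
  have hsub : perms ![l1, l2, l3] ∪ perms ![m1, m2, m3] ⊆ K := by
    rintro w (⟨π, rfl⟩ | ⟨π, rfl⟩)
    · refine ⟨?_, ?_, ?_⟩
      · have h := Equiv.sum_comp π ![l1,l2,l3]
        rw [Fin.sum_univ_three, Fin.sum_univ_three] at h
        simp only [Function.comp_apply]
        simp only [Matrix.cons_val_zero, Matrix.cons_val_one, Matrix.head_cons,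
          Matrix.cons_val_two, Matrix.tail_cons] at h
        linarith
      · intro i
        simp only [Function.comp_apply]
        exact ⟨by linarith [(hboxl (π i)).1], (hboxl (π i)).2⟩
      · simp only [Function.comp_apply]
        nlinarith [mul_le_mul_of_nonneg_left (hboxl (π 0)).2 (by linarith : (0:ℝ) ≤ l3 - m3),
          mul_le_mul_of_nonneg_left (hboxl (π 2)).1 (by linarith : (0:ℝ) ≤ l1 - m1)]
    · refine ⟨?_, ?_, ?_⟩
      · have h := Equiv.sum_comp π ![m1,m2,m3]
        rw [Fin.sum_univ_three, Fin.sum_univ_three] at h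
        simp only [Function.comp_apply]
        simp only [Matrix.cons_val_zero, Matrix.cons_val_one, Matrix.head_cons,
          Matrix.cons_val_two, Matrix.tail_cons] at h
        linarith
      · intro i
        simp only [Function.comp_apply]
        exact ⟨(hboxm (π i)).1, by linarith [(hboxm (π i)).2]⟩
      · simp only [Function.comp_apply]
        nlinarith [mul_le_mul_of_nonneg_left (hboxm (π 0)).2 (by linarith : (0:ℝ) ≤ l3 - m3),
          mul_le_mul_of_nonneg_left (hboxm (π 2)).1 (by linarith : (0:ℝ) ≤ l1 - m1)]
  have hvK : v ∈ K := convexHull_min hsub hKconv hv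
  obtain ⟨hsum, hbox, hf⟩ := hvK
  have hx0 : m1 < v 0 := by
    by_contra h; push_neg at h
    exact hnm (rado m1 m2 m3 hm12 hm23 v hd01 hd12 (by linarith) h (hbox 2).1)
  have hz2 : v 2 < l3 := by
    by_contra h; push_neg at h
    exact hnl (rado l1 l2 l3 hl12 hl23 v hd01 hd12 (by linarith) (hbox 0).2 h)
  have hdm1 : (0:ℝ) < l1 - m1 := by linarith
  have hdm3 : (0:ℝ) < l3 - m3 := by linarith
  set a := (v 0 - m1)/(l1 - m1) with hadef
  set b := (l3 - v 2)/(l3 - m3) with hbdef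
  have ha' : a * (l1 - m1) = v 0 - m1 := div_mul_cancel₀ _ (by linarith)
  have hb' : b * (l3 - m3) = l3 - v 2 := div_mul_cancel₀ _ (by linarith)
  have ha0 : 0 ≤ a := div_nonneg (by linarith) (by linarith)
  have hb0 : 0 ≤ b := div_nonneg (by linarith) (by linarith)
  have e1 : a * ((l1-m1)*(l3-m3)) = (v 0 - m1)*(l3-m3) := by linear_combination (l3-m3)*ha'
  have e2 : b * ((l1-m1)*(l3-m3)) = (l3 - v 2)*(l1-m1) := by linear_combination (l1-m1)*hb'
  have hc0 : 0 ≤ 1 - a - b := by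
    have hD : 0 < (l1-m1)*(l3-m3) := mul_pos hdm1 hdm3
    have h2 : (1 - a - b) * ((l1-m1)*(l3-m3))
        = (l1-m1)*(l3-m3) - (v 0 - m1)*(l3-m3) - (l3 - v 2)*(l1-m1) := by
      linear_combination -e1 - e2
    have h3' : 0 ≤ (1 - a - b) * ((l1-m1)*(l3-m3)) := by rw [h2]; nlinarith [hf]
    by_contra hcon
    push_neg at hcon
    nlinarith [h3', hD]
  refine ⟨hx0, hz2, hf, ?_⟩
  have key : v = a • ![l1,l2,l3] + b • ![m1,m2,m3] + (1-a-b) • ![m1, n-m1-l3, l3] := by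
    funext i
    fin_cases i
    · show v 0 = a * l1 + b * m1 + (1-a-b) * m1
      linear_combination -ha'
    · show v 1 = a * l2 + b * m2 + (1-a-b) * (n - m1 - l3)
      linear_combination hsum + ha' - hb' - a*hln - b*hmn
    · show v 2 = a * l3 + b * m3 + (1-a-b) * l3
      linear_combination hb'
  rw [key]
  have hsmem := (convex_convexHull ℝ
      ({![l1, l2, l3], ![m1, m2, m3], ![m1, n - m1 - l3, l3]} : Set (Fin 3 → ℝ))).sum_mem
    (t := (Finset.univ : Finset (Fin 3))) (w := ![a, b, 1-a-b])
    (z := ![![l1,l2,l3], ![m1,m2,m3], ![m1, n-m1-l3, l3]])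
    (by intro i _
        fin_cases i
        · exact ha0
        · exact hb0
        · exact hc0)
    (by rw [Fin.sum_univ_three]; simp only [Matrix.cons_val_zero, Matrix.cons_val_one,
        Matrix.head_cons, Matrix.cons_val_two, Matrix.tail_cons]; ring)
    (by intro i _; fin_cases i <;> exact subset_convexHull ℝ _ (by simp))
  rw [Fin.sum_univ_three] at hsmem
  simp only [Matrix.cons_val_zero, Matrix.cons_val_one, Matrix.head_cons,
    Matrix.cons_val_two, Matrix.tail_cons] at hsmem
  exact hsmem
end

section
/- Let λ, μ be weakly decreasing triples of the same size with λ₃ − μ₃ = 1 and μ₁ < λ₁, and let ι = (μ₁, n−μ₁−λ₃, λ₃). Fix t ∈ ℤ_{>0}. Suppose (x,y,z) = a·tλ + b·tμ + c·tι with a,b,c > 0 and a+b+c = 1. Set α = (t−(tλ₃−z))λ + (tλ₃−z)μ. Then the third coordinate of α equals z, tλ₃ − z = tb, and x < tλ₁ − (tλ₃−z)(λ₁−μ₁), which is the first coordinate of α. In particular, if (x,y,z) is an integer point, it is dominated by α. -/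
/-- Let `λ, μ` be weakly decreasing real triples of the same sum `n` with `λ₃ = μ₃ + 1` and
`μ₁ < λ₁`, and `ι = (μ₁, n-μ₁-λ₃, λ₃)`.  Fix `t > 0` and suppose
`(x,y,z) = a·tλ + b·tμ + c·tι` with `a,b,c > 0`, `a+b+c = 1`.  With
`α = (t-(tλ₃-z))λ + (tλ₃-z)μ`, the third coordinate of `α` equals `z`, `tλ₃ - z = tb`, and
`x < tλ₁ - (tλ₃-z)(λ₁-μ₁)`, the first coordinate of `α`; in particular `x ≤ α₁` and
`x + y ≤ α₁ + α₂`, i.e. `(x,y,z)` is dominated by `α`. -/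
theorem stmt_10 (l1 l2 l3 m1 m2 m3 n : ℝ)
    (hl : l1 ≥ l2 ∧ l2 ≥ l3) (hm : m1 ≥ m2 ∧ m2 ≥ m3)
    (hln : l1 + l2 + l3 = n) (hmn : m1 + m2 + m3 = n)
    (h3 : l3 = m3 + 1) (h1 : m1 < l1)
    (t : ℕ) (ht : 0 < t)
    (a b c x y z : ℝ) (ha : 0 < a) (hb : 0 < b) (hc : 0 < c) (habc : a + b + c = 1)
    (hx : x = a * (t * l1) + b * (t * m1) + c * (t * m1))
    (hy : y = a * (t * l2) + b * (t * m2) + c * (t * (n - m1 - l3)))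
    (hz : z = a * (t * l3) + b * (t * m3) + c * (t * l3)) :
    ((t : ℝ) - (t * l3 - z)) * l3 + (t * l3 - z) * m3 = z ∧
      (t : ℝ) * l3 - z = t * b ∧
      x < t * l1 - (t * l3 - z) * (l1 - m1) ∧
      x ≤ ((t : ℝ) - (t * l3 - z)) * l1 + (t * l3 - z) * m1 ∧
      x + y ≤ (((t : ℝ) - (t * l3 - z)) * l1 + (t * l3 - z) * m1) +
        (((t : ℝ) - (t * l3 - z)) * l2 + (t * l3 - z) * m2) := by
  have ht' : (0:ℝ) < t := by exact_mod_cast ht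
  have hc' : c = 1 - a - b := by linarith
  have hzz : (t : ℝ) * l3 - z = t * b := by rw [hz, h3, hc']; ring
  have key : (t : ℝ) * l1 - t * b * (l1 - m1) - x = t * c * (l1 - m1) := by
    rw [hx, hc']; ring
  have hpos : 0 < (t : ℝ) * c * (l1 - m1) :=
    mul_pos (mul_pos ht' hc) (sub_pos.mpr h1)
  refine ⟨?_, hzz, ?_, ?_, ?_⟩
  · rw [hzz, hz, h3, hc']; ring
  · rw [hzz]; linarith
  · rw [hzz]
    have : ((t : ℝ) - t * b) * l1 + t * b * m1 = t * l1 - t * b * (l1 - m1) := by ring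
    linarith
  · rw [hzz]
    have e5 : x + y = ((t : ℝ) - t * b) * l1 + t * b * m1 +
        (((t : ℝ) - t * b) * l2 + t * b * m2) := by
      rw [hx, hy, hc', ← hln]; ring
    linarith
end

section
/- Let T be a semistandard Young tableau of shape ν = λ + κ where λ and κ are partitions (entrywise sum, identifying partitions with infinite sequences padded by zeros). Then there exist semistandard Young tableaux T₁ of shape λ and T₂ of shape κ such that content(T) = content(T₁) + content(T₂). (Equivalently: every content vector of a semistandard tableau of shape λ+κ decomposes as a sum of a content vector of shape λ and one of shape κ.) -/
/-!
The columns of `λ + κ` are the columns of `λ` and of `κ` merged by decreasing length: a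
column of `λ` of length `m` is preceded by the `κ.rowLen m` columns of `κ` longer than `m`,
and a column of `κ` of length `m` by the `λ.rowLen (m - 1)` columns of `λ` of length at least
`m`. Both embeddings of columns are strictly monotone and map cells into `λ + κ`, so reading
`T` along them gives semistandard tableaux `T₁` and `T₂`. Their images are disjoint and have
`|λ| + |κ| = |λ + κ|` cells in total, so they partition the cells of `T`, which splits its content.
-/

/-- The content of a semistandard Young tableau: `content T v` is the number of cells whose
entry equals `v`. -/
def content {μ : YoungDiagram} (T : SemistandardYoungTableau μ) (v : ℕ) : ℕ :=
  (μ.cells.filter fun c => T c.1 c.2 = v).card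

open Finset

namespace SemistandardYoungTableau

variable {μ ν : YoungDiagram}

def restrictCols (T : SemistandardYoungTableau ν) (f : ℕ → ℕ) (hf : StrictMono f)
    (hμν : ∀ {i j}, (i, j) ∈ μ → (i, f j) ∈ ν) : SemistandardYoungTableau μ where
  entry i j := if (i, j) ∈ μ then T i (f j) else 0
  row_weak' {i j₁ j₂} hj h := by
    rw [if_pos (μ.up_left_mem le_rfl hj.le h), if_pos h]
    exact T.row_weak (hf hj) (hμν h)
  col_strict' {i₁ i₂ j} hi h := by
    rw [if_pos (μ.up_left_mem hi.le le_rfl h), if_pos h]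
    exact T.col_strict hi (hμν h)
  zeros' h := if_neg h

theorem restrictCols_apply (T : SemistandardYoungTableau ν) (f : ℕ → ℕ) (hf : StrictMono f)
    (hμν : ∀ {i j}, (i, j) ∈ μ → (i, f j) ∈ ν) {i j : ℕ} (h : (i, j) ∈ μ) :
    T.restrictCols f hf hμν i j = T i (f j) :=
  if_pos h

theorem content_restrictCols (T : SemistandardYoungTableau ν) (f : ℕ → ℕ) (hf : StrictMono f)
    (hμν : ∀ {i j}, (i, j) ∈ μ → (i, f j) ∈ ν) (v : ℕ) :
    content (T.restrictCols f hf hμν) v =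
      #{c ∈ μ.cells.image (Prod.map id f) | T c.1 c.2 = v} := by
  rw [filter_image, card_image_of_injective _ (Function.injective_id.prodMap hf.injective)]
  exact congrArg card <| filter_congr fun c hc => by
    rw [restrictCols_apply T f hf hμν ((YoungDiagram.mem_cells c).mp hc)]
    rfl

end SemistandardYoungTableau

namespace YoungDiagram

theorem card_cells_eq_sum_rowLen (μ : YoungDiagram) {N : ℕ} (hN : μ.colLen 0 ≤ N) :
    #μ.cells = ∑ i ∈ range N, μ.rowLen i := by
  rw [card_eq_sum_card_fiberwise (f := Prod.fst) (t := range N)]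
  · exact sum_congr rfl fun i _ => (μ.rowLen_eq_card).symm
  · intro c hc
    have h0 : (c.1, 0) ∈ μ := μ.up_left_mem le_rfl (Nat.zero_le _) ((mem_cells _).mp hc)
    exact mem_range.mpr ((mem_iff_lt_colLen.mp h0).trans_le hN)

theorem colLen_zero_le_of_rowLen_le {μ ν : YoungDiagram} (h : ∀ i, μ.rowLen i ≤ ν.rowLen i) :
    μ.colLen 0 ≤ ν.colLen 0 := by
  by_contra! hlt
  have hμ := mem_iff_lt_rowLen.mp (mem_iff_lt_colLen.mpr hlt)
  have hν := mem_iff_lt_rowLen.mpr (hμ.trans_le (h _))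
  exact (mem_iff_lt_colLen.mp hν).false

variable (lam kap : YoungDiagram)

/-- The column of `lam + kap` receiving column `t` of `lam`. -/
def inlCol (t : ℕ) : ℕ :=
  t + kap.rowLen (lam.colLen t)

/-- The column of `lam + kap` receiving column `j` of `kap`. -/
def inrCol (j : ℕ) : ℕ :=
  j + lam.rowLen (kap.colLen j - 1)

theorem inlCol_strictMono : StrictMono (inlCol lam kap) := fun a b hab => by
  have := kap.rowLen_anti _ _ (lam.colLen_anti a b hab.le)
  unfold inlCol
  omega

theorem inrCol_strictMono : StrictMono (inrCol lam kap) := fun a b hab => by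
  have := lam.rowLen_anti _ _ (Nat.sub_le_sub_right (kap.colLen_anti a b hab.le) 1)
  unfold inrCol
  omega

/-- A column of `lam` of length `a` lands left of a column of `kap` of length `b` exactly
when `b ≤ a`. -/
theorem inlCol_ne_inrCol {t j : ℕ} (ht : 0 < lam.colLen t) (hj : 0 < kap.colLen j) :
    inlCol lam kap t ≠ inrCol lam kap j := by
  unfold inlCol inrCol
  set a := lam.colLen t
  set b := kap.colLen j
  have ht_lam : t < lam.rowLen (a - 1) := mem_iff_lt_rowLen.mp (mem_iff_lt_colLen.mpr (by omega))
  have ht_lam' : lam.rowLen a ≤ t :=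
    not_lt.mp fun h => (mem_iff_lt_colLen.mp (mem_iff_lt_rowLen.mpr h)).false
  have hj_kap : j < kap.rowLen (b - 1) := mem_iff_lt_rowLen.mp (mem_iff_lt_colLen.mpr (by omega))
  have hj_kap' : kap.rowLen b ≤ j :=
    not_lt.mp fun h => (mem_iff_lt_colLen.mp (mem_iff_lt_rowLen.mpr h)).false
  rcases le_or_gt b a with hba | hab
  · have := lam.rowLen_anti (b - 1) (a - 1) (by omega)
    have := kap.rowLen_anti b a hba
    omega
  · have := lam.rowLen_anti a (b - 1) (by omega)
    have := kap.rowLen_anti a (b - 1) (by omega)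
    omega

variable {lam kap} {nu : YoungDiagram}

theorem mem_of_mem_inlCol (hsum : ∀ r : ℕ, nu.rowLen r = lam.rowLen r + kap.rowLen r)
    {i t : ℕ} (h : (i, t) ∈ lam) : (i, inlCol lam kap t) ∈ nu := by
  have hi := mem_iff_lt_colLen.mp h
  have := kap.rowLen_anti _ _ hi.le
  rw [mem_iff_lt_rowLen] at h ⊢
  rw [hsum, inlCol]
  omega

theorem mem_of_mem_inrCol (hsum : ∀ r : ℕ, nu.rowLen r = lam.rowLen r + kap.rowLen r)
    {i j : ℕ} (h : (i, j) ∈ kap) : (i, inrCol lam kap j) ∈ nu := by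
  have hi := mem_iff_lt_colLen.mp h
  have := lam.rowLen_anti i (kap.colLen j - 1) (by omega)
  rw [mem_iff_lt_rowLen] at h ⊢
  rw [hsum, inrCol]
  omega

theorem card_cells_eq_add (hsum : ∀ r : ℕ, nu.rowLen r = lam.rowLen r + kap.rowLen r) :
    #nu.cells = #lam.cells + #kap.cells := by
  have hlam := colLen_zero_le_of_rowLen_le (ν := nu) fun r => (hsum r).ge.trans' le_self_add
  have hkap := colLen_zero_le_of_rowLen_le (ν := nu) fun r => (hsum r).ge.trans' le_add_self
  rw [nu.card_cells_eq_sum_rowLen le_rfl, lam.card_cells_eq_sum_rowLen hlam,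
    kap.card_cells_eq_sum_rowLen hkap, ← sum_add_distrib]
  exact sum_congr rfl fun r _ => hsum r

theorem disjoint_image_inlCol_inrCol :
    Disjoint (lam.cells.image (Prod.map id (inlCol lam kap)))
      (kap.cells.image (Prod.map id (inrCol lam kap))) := by
  simp only [disjoint_left, mem_image, not_exists, not_and]
  rintro _ ⟨⟨i, t⟩, ht, rfl⟩ ⟨i', j⟩ hj heq
  have ht_pos := (Nat.zero_le i).trans_lt (mem_iff_lt_colLen.mp ((mem_cells _).mp ht))
  have hj_pos := (Nat.zero_le i').trans_lt (mem_iff_lt_colLen.mp ((mem_cells _).mp hj))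
  exact inlCol_ne_inrCol lam kap ht_pos hj_pos (congrArg Prod.snd heq).symm

theorem image_inlCol_union_image_inrCol
    (hsum : ∀ r : ℕ, nu.rowLen r = lam.rowLen r + kap.rowLen r) :
    lam.cells.image (Prod.map id (inlCol lam kap)) ∪
      kap.cells.image (Prod.map id (inrCol lam kap)) = nu.cells := by
  refine eq_of_subset_of_card_le ?_ ?_
  · simp only [union_subset_iff, image_subset_iff, mem_cells]
    exact ⟨fun _ => mem_of_mem_inlCol hsum, fun _ => mem_of_mem_inrCol hsum⟩
  · rw [card_union_of_disjoint disjoint_image_inlCol_inrCol,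
      card_image_of_injective _ (Function.injective_id.prodMap (inlCol_strictMono lam kap).injective),
      card_image_of_injective _ (Function.injective_id.prodMap (inrCol_strictMono lam kap).injective),
      card_cells_eq_add hsum]

end YoungDiagram

open YoungDiagram

/-- If `T` is a semistandard Young tableau of shape `ν = λ + κ` (componentwise sum of row
lengths), then there are semistandard Young tableaux `T₁` of shape `λ` and `T₂` of shape `κ`
with `content T = content T₁ + content T₂`. -/
theorem stmt_11 (lam kap nu : YoungDiagram)
    (hsum : ∀ r : ℕ, nu.rowLen r = lam.rowLen r + kap.rowLen r)
    (T : SemistandardYoungTableau nu) :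
    ∃ (T₁ : SemistandardYoungTableau lam) (T₂ : SemistandardYoungTableau kap),
      ∀ v : ℕ, content T v = content T₁ v + content T₂ v := by
  refine ⟨T.restrictCols _ (inlCol_strictMono lam kap) (mem_of_mem_inlCol hsum),
    T.restrictCols _ (inrCol_strictMono lam kap) (mem_of_mem_inrCol hsum), fun v => ?_⟩
  rw [SemistandardYoungTableau.content_restrictCols, SemistandardYoungTableau.content_restrictCols,
    ← card_union_of_disjoint (disjoint_filter_filter disjoint_image_inlCol_inrCol),
    ← filter_union, image_inlCol_union_image_inrCol hsum]
  rfl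
end

section
/- Let λ⁽¹⁾, …, λ⁽ᵗ⁾ be partitions and T a semistandard Young tableau of shape λ⁽¹⁾ + ⋯ + λ⁽ᵗ⁾. Then there exist semistandard Young tableaux T₁, …, T_t of shapes λ⁽¹⁾, …, λ⁽ᵗ⁾ respectively, with content(T) = content(T₁) + ⋯ + content(T_t). -/
/-!
Induct on an upper bound `N + 1` for the entries of `T`. The cells of `T` with entries `< N`
form a diagram `ν'` such that `ν / ν'` is a horizontal strip (the cells filled with `N`). Since
the rows of `ν` are the sums of the rows of the `λ⁽ʲ⁾`, the interlacing inequalities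
`ν(r + 1) ≤ ν'(r) ≤ ν(r)` can be split row by row into `λ⁽ʲ⁾(r + 1) ≤ κ⁽ʲ⁾(r) ≤ λ⁽ʲ⁾(r)`
with `ν'(r) = Σⱼ κ⁽ʲ⁾(r)`. Induction applied to `T` restricted to `ν'` gives tableaux of
shapes `κ⁽ʲ⁾`, and filling the horizontal strips `λ⁽ʲ⁾ / κ⁽ʲ⁾` with `N` produces the `Tⱼ`;
the number of `N`s matches because the cell counts of `ν` and `ν'` are the sums of those of
the `λ⁽ʲ⁾` and the `κ⁽ʲ⁾`.
-/

open Finset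

theorem Finset.exists_sum_eq_of_sum_le_of_le_sum {ι : Type*} (s : Finset ι) {a b : ι → ℕ}
    (hab : ∀ i ∈ s, a i ≤ b i) {D : ℕ} (ha : ∑ i ∈ s, a i ≤ D) (hb : D ≤ ∑ i ∈ s, b i) :
    ∃ f : ι → ℕ, (∀ i ∈ s, a i ≤ f i ∧ f i ≤ b i) ∧ ∑ i ∈ s, f i = D := by
  classical
  induction s using Finset.induction_on generalizing D with
  | empty => exact ⟨a, by simp, by simp at ha hb ⊢; omega⟩
  | insert i s hi ih =>
    rw [sum_insert hi] at ha hb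
    have hab_s : ∑ k ∈ s, a k ≤ ∑ k ∈ s, b k :=
      sum_le_sum fun k hk => hab k (mem_insert_of_mem hk)
    have hab_i := hab i (mem_insert_self i s)
    -- greedy choice: give `i` as much as possible while leaving enough for the lower bounds on `s`
    set x := min (b i) (D - ∑ k ∈ s, a k)
    obtain ⟨f, hf, hfsum⟩ := ih (fun k hk => hab k (mem_insert_of_mem hk)) (D := D - x)
      (by omega) (by omega)
    refine ⟨Function.update f i x, fun k hk => ?_, ?_⟩
    · rcases mem_insert.1 hk with rfl | hk
      · simp only [Function.update_self]
        omega
      · rw [Function.update_of_ne (ne_of_mem_of_not_mem hk hi)]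
        exact hf k hk
    · rw [sum_insert hi, sum_update_of_notMem hi, hfsum, Function.update_self]
      omega

namespace YoungDiagram

variable {μ ν : YoungDiagram}

theorem le_iff_forall_rowLen_le : μ ≤ ν ↔ ∀ r, μ.rowLen r ≤ ν.rowLen r := by
  refine ⟨fun h r => le_of_forall_lt fun j hj => ?_, fun h c hc => ?_⟩
  · exact mem_iff_lt_rowLen.1 (h (mem_iff_lt_rowLen.2 hj))
  · exact mem_iff_lt_rowLen.2 ((mem_iff_lt_rowLen.1 hc).trans_le (h c.1))

/-- `IsHorizontalStrip μ ν`: the skew shape `ν / μ` has at most one cell in each column. -/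
def IsHorizontalStrip (μ ν : YoungDiagram) : Prop :=
  μ ≤ ν ∧ ∀ r, ν.rowLen (r + 1) ≤ μ.rowLen r

def restrictRowLen (μ : YoungDiagram) (g : ℕ → ℕ) (hg : Antitone g) : YoungDiagram where
  cells := μ.cells.filter fun c => c.2 < g c.1
  isLowerSet := by
    rintro ⟨i₂, j₂⟩ ⟨i₁, j₁⟩ ⟨hi, hj⟩ hc
    simp only [coe_filter, mem_cells, Set.mem_ofPred_eq] at hc ⊢
    exact ⟨μ.up_left_mem hi hj hc.1, hj.trans_lt (hc.2.trans_le (hg hi))⟩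

section restrictRowLen

variable {g : ℕ → ℕ} {hg : Antitone g}

theorem mem_restrictRowLen {i j : ℕ} :
    (i, j) ∈ μ.restrictRowLen g hg ↔ (i, j) ∈ μ ∧ j < g i := by
  rw [← mem_cells]
  exact mem_filter.trans (and_congr_left' (mem_cells _))

theorem rowLen_restrictRowLen (r : ℕ) :
    (μ.restrictRowLen g hg).rowLen r = min (μ.rowLen r) (g r) :=
  eq_of_forall_lt_iff fun j => by rw [← mem_iff_lt_rowLen, mem_restrictRowLen,
    mem_iff_lt_rowLen, lt_min_iff]

theorem restrictRowLen_le : μ.restrictRowLen g hg ≤ μ :=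
  fun _ hc => (mem_restrictRowLen.1 hc).1

end restrictRowLen

theorem card_cells_eq_sum_rowLen_s12 (μ : YoungDiagram) {n : ℕ} (hn : μ.rowLen n = 0) :
    μ.cells.card = ∑ r ∈ range n, μ.rowLen r := by
  have hrows : Set.MapsTo Prod.fst (μ.cells : Set (ℕ × ℕ)) (range n : Set ℕ) := by
    rintro ⟨i, j⟩ hc
    have hj : j < μ.rowLen i := mem_iff_lt_rowLen.1 ((mem_cells _).1 hc)
    by_contra hi
    have := μ.rowLen_anti n i (by simpa using hi)
    omega
  rw [card_eq_sum_card_fiberwise hrows]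
  exact sum_congr rfl fun r _ => (μ.rowLen_eq_card).symm

section sum

variable {ι : Type*} [Fintype ι] {lam : ι → YoungDiagram}

theorem rowLen_le_of_rowLen_eq_sum (hsum : ∀ r, ν.rowLen r = ∑ j, (lam j).rowLen r) (j : ι)
    (r : ℕ) : (lam j).rowLen r ≤ ν.rowLen r :=
  hsum r ▸ single_le_sum (f := fun j => (lam j).rowLen r) (fun _ _ => Nat.zero_le _) (mem_univ j)

theorem card_cells_eq_sum_of_rowLen_eq_sum (hsum : ∀ r, ν.rowLen r = ∑ j, (lam j).rowLen r) :
    ν.cells.card = ∑ j, (lam j).cells.card := by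
  set n := ν.colLen 0
  have hn : ν.rowLen n = 0 := by
    by_contra h
    have := mem_iff_lt_colLen.1 (mem_iff_lt_rowLen.2 (Nat.pos_of_ne_zero h))
    omega
  have hlam (j : ι) : (lam j).rowLen n = 0 :=
    Nat.eq_zero_of_le_zero (hn ▸ rowLen_le_of_rowLen_eq_sum hsum j n)
  rw [ν.card_cells_eq_sum_rowLen_s12 hn, sum_congr rfl fun j _ => (lam j).card_cells_eq_sum_rowLen_s12
    (hlam j), sum_comm]
  exact sum_congr rfl fun r _ => hsum r

theorem exists_isHorizontalStrip_rowLen_eq_sum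
    (hsum : ∀ r, ν.rowLen r = ∑ j, (lam j).rowLen r) (hμ : μ.IsHorizontalStrip ν) :
    ∃ κ : ι → YoungDiagram, (∀ j, (κ j).IsHorizontalStrip (lam j)) ∧
      ∀ r, μ.rowLen r = ∑ j, (κ j).rowLen r := by
  have hsplit (r : ℕ) : ∃ g : ι → ℕ,
      (∀ j ∈ univ, (lam j).rowLen (r + 1) ≤ g j ∧ g j ≤ (lam j).rowLen r) ∧
        ∑ j, g j = μ.rowLen r :=
    univ.exists_sum_eq_of_sum_le_of_le_sum (fun j _ => (lam j).rowLen_anti _ _ r.le_succ)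
      (hsum (r + 1) ▸ hμ.2 r) (hsum r ▸ le_iff_forall_rowLen_le.1 hμ.1 r)
  choose g hg hgsum using hsplit
  have hanti (j : ι) : Antitone fun r => g r j := antitone_nat_of_succ_le fun r =>
    (hg (r + 1) j (mem_univ j)).2.trans (hg r j (mem_univ j)).1
  have hrow (j : ι) (r : ℕ) : ((lam j).restrictRowLen _ (hanti j)).rowLen r = g r j := by
    rw [rowLen_restrictRowLen, min_eq_right (hg r j (mem_univ j)).2]
  refine ⟨fun j => (lam j).restrictRowLen _ (hanti j),
    fun j => ⟨restrictRowLen_le, fun r => ?_⟩, fun r => ?_⟩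
  · rw [hrow]
    exact (hg r j (mem_univ j)).1
  · simp only [hrow, hgsum]

end sum

end YoungDiagram

namespace SemistandardYoungTableau

open YoungDiagram

variable {μ ν : YoungDiagram}

theorem content_eq_zero_iff {T : SemistandardYoungTableau μ} {v : ℕ} :
    content T v = 0 ↔ ∀ i j, (i, j) ∈ μ → T i j ≠ v := by
  simp [content, filter_eq_empty_iff]

theorem content_eq_card_sub_card {T : SemistandardYoungTableau ν} {v : ℕ} (h : μ ≤ ν)
    (hv : ∀ i j, (i, j) ∈ ν → (T i j = v ↔ (i, j) ∉ μ)) :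
    content T v = ν.cells.card - μ.cells.card := by
  have hcells : ν.cells.filter (fun c => T c.1 c.2 = v) = ν.cells \ μ.cells := by
    ext ⟨i, j⟩
    simp only [mem_filter, mem_sdiff, mem_cells]
    exact ⟨fun hc => ⟨hc.1, (hv i j hc.1).1 hc.2⟩, fun hc => ⟨hc.1, (hv i j hc.1).2 hc.2⟩⟩
  rw [content, hcells, card_sdiff_of_subset (cells_subset_iff.2 h)]

theorem entry_mono (T : SemistandardYoungTableau ν) {i₁ i₂ j₁ j₂ : ℕ} (hi : i₁ ≤ i₂)
    (hj : j₁ ≤ j₂) (hc : (i₂, j₂) ∈ ν) : T i₁ j₁ ≤ T i₂ j₂ :=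
  (T.row_weak_of_le hj (ν.up_left_mem hi le_rfl hc)).trans (T.col_weak hi hc)

def restrict (T : SemistandardYoungTableau ν) (h : μ ≤ ν) : SemistandardYoungTableau μ where
  entry i j := if (i, j) ∈ μ then T i j else 0
  row_weak' hj hc := by
    rw [if_pos (μ.up_left_mem le_rfl hj.le hc), if_pos hc]
    exact T.row_weak hj (h hc)
  col_strict' hi hc := by
    rw [if_pos (μ.up_left_mem hi.le le_rfl hc), if_pos hc]
    exact T.col_strict hi (h hc)
  zeros' hc := if_neg hc

theorem restrict_apply (T : SemistandardYoungTableau ν) (h : μ ≤ ν) {i j : ℕ} (hc : (i, j) ∈ μ) :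
    T.restrict h i j = T i j :=
  if_pos hc

theorem content_restrict (T : SemistandardYoungTableau ν) (h : μ ≤ ν) {v : ℕ}
    (hv : ∀ i j, (i, j) ∈ ν → T i j = v → (i, j) ∈ μ) :
    content (T.restrict h) v = content T v := by
  unfold content
  congr 1
  ext ⟨i, j⟩
  simp only [mem_filter, mem_cells]
  constructor
  · rintro ⟨hc, hTv⟩
    exact ⟨h hc, restrict_apply T h hc ▸ hTv⟩
  · rintro ⟨hc, hTv⟩
    have hμ := hv i j hc hTv
    exact ⟨hμ, (restrict_apply T h hμ).trans hTv⟩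

def addStrip (S : SemistandardYoungTableau μ) (h : μ.IsHorizontalStrip ν) (N : ℕ)
    (hS : ∀ i j, (i, j) ∈ μ → S i j < N) : SemistandardYoungTableau ν where
  entry i j := if (i, j) ∈ μ then S i j else if (i, j) ∈ ν then N else 0
  row_weak' {i j₁ j₂} hj hc := by
    by_cases h₂ : (i, j₂) ∈ μ
    · rw [if_pos (μ.up_left_mem le_rfl hj.le h₂), if_pos h₂]
      exact S.row_weak hj h₂
    · rw [if_neg h₂, if_pos hc]
      split_ifs with h₁
      exacts [(hS _ _ h₁).le, le_rfl, Nat.zero_le N]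
  col_strict' {i₁ i₂ j} hi hc := by
    -- the strip has at most one cell per column, so the cell above a strip cell lies in `μ`
    have h₁ : (i₁, j) ∈ μ := mem_iff_lt_rowLen.2 <| calc
      j < ν.rowLen i₂ := mem_iff_lt_rowLen.1 hc
      _ ≤ ν.rowLen (i₁ + 1) := ν.rowLen_anti _ _ hi
      _ ≤ μ.rowLen i₁ := h.2 i₁
    rw [if_pos h₁]
    split_ifs with h₂
    · exact S.col_strict hi h₂
    · exact hS _ _ h₁
  zeros' hc := by rw [if_neg fun hμ => hc (h.1 hμ), if_neg hc]

section addStrip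

variable (S : SemistandardYoungTableau μ) (h : μ.IsHorizontalStrip ν) (N : ℕ)
  (hS : ∀ i j, (i, j) ∈ μ → S i j < N)

theorem addStrip_apply_of_mem {i j : ℕ} (hc : (i, j) ∈ μ) : S.addStrip h N hS i j = S i j :=
  if_pos hc

theorem addStrip_apply_of_notMem {i j : ℕ} (hμ : (i, j) ∉ μ) (hν : (i, j) ∈ ν) :
    S.addStrip h N hS i j = N :=
  (if_neg hμ).trans (if_pos hν)

theorem content_addStrip_of_ne {v : ℕ} (hv : v ≠ N) :
    content (S.addStrip h N hS) v = content S v := by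
  unfold content
  congr 1
  ext ⟨i, j⟩
  simp only [mem_filter, mem_cells]
  by_cases hc : (i, j) ∈ μ
  · rw [addStrip_apply_of_mem S h N hS hc]
    exact ⟨fun hv => ⟨hc, hv.2⟩, fun hv => ⟨h.1 hc, hv.2⟩⟩
  · refine ⟨fun ⟨hν, hNv⟩ => absurd ?_ hv, fun hc' => absurd hc'.1 hc⟩
    rw [← hNv, addStrip_apply_of_notMem S h N hS hc hν]

theorem content_addStrip_self :
    content (S.addStrip h N hS) N = ν.cells.card - μ.cells.card := by
  refine content_eq_card_sub_card h.1 fun i j hν => ?_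
  by_cases hc : (i, j) ∈ μ
  · rw [addStrip_apply_of_mem S h N hS hc]
    exact iff_of_false (hS i j hc).ne (not_not.2 hc)
  · rw [addStrip_apply_of_notMem S h N hS hc hν]
    exact iff_of_true rfl hc

end addStrip

def sublevel (T : SemistandardYoungTableau ν) (N : ℕ) : YoungDiagram where
  cells := ν.cells.filter fun c => T c.1 c.2 < N
  isLowerSet := by
    rintro ⟨i₂, j₂⟩ ⟨i₁, j₁⟩ ⟨hi, hj⟩ hc
    simp only [coe_filter, mem_cells, Set.mem_ofPred_eq] at hc ⊢
    exact ⟨ν.up_left_mem hi hj hc.1, (T.entry_mono hi hj hc.1).trans_lt hc.2⟩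

section sublevel

variable (T : SemistandardYoungTableau ν) (N : ℕ)

theorem mem_sublevel {i j : ℕ} : (i, j) ∈ T.sublevel N ↔ (i, j) ∈ ν ∧ T i j < N := by
  rw [← mem_cells]
  exact mem_filter.trans (and_congr_left' (mem_cells _))

theorem sublevel_le : T.sublevel N ≤ ν := fun _ hc => (T.mem_sublevel N |>.1 hc).1

theorem isHorizontalStrip_sublevel (hT : ∀ i j, (i, j) ∈ ν → T i j ≤ N) :
    (T.sublevel N).IsHorizontalStrip ν := by
  refine ⟨T.sublevel_le N, fun r => le_of_forall_lt fun j hj => ?_⟩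
  have hc : (r + 1, j) ∈ ν := mem_iff_lt_rowLen.2 hj
  exact mem_iff_lt_rowLen.1 <| (T.mem_sublevel N).2
    ⟨ν.up_left_mem r.le_succ le_rfl hc, (T.col_strict r.lt_succ_self hc).trans_le (hT _ _ hc)⟩

end sublevel

end SemistandardYoungTableau

open YoungDiagram SemistandardYoungTableau in
theorem exists_content_eq_sum_of_lt {ι : Type*} [Fintype ι] (N : ℕ) {lam : ι → YoungDiagram}
    {ν : YoungDiagram} (hsum : ∀ r, ν.rowLen r = ∑ j, (lam j).rowLen r)
    (T : SemistandardYoungTableau ν) (hT : ∀ i j, (i, j) ∈ ν → T i j < N) :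
    ∃ Ts : (j : ι) → SemistandardYoungTableau (lam j),
      ∀ v, content T v = ∑ j, content (Ts j) v := by
  induction N generalizing lam ν with
  | zero =>
    have hempty (i j : ℕ) : (i, j) ∉ ν := fun hc => Nat.not_lt_zero _ (hT i j hc)
    have hlam (k : ι) : lam k ≤ ν := le_iff_forall_rowLen_le.2 (rowLen_le_of_rowLen_eq_sum hsum k)
    refine ⟨fun _ => default, fun v => ?_⟩
    rw [content_eq_zero_iff.2 fun i j hc => absurd hc (hempty i j), eq_comm]
    exact sum_eq_zero fun k _ =>
      content_eq_zero_iff.2 fun i j hc => absurd (hlam k hc) (hempty i j)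
  | succ N ih =>
    have hle (i j : ℕ) (hc : (i, j) ∈ ν) : T i j ≤ N := Nat.le_of_lt_succ (hT i j hc)
    obtain ⟨κ, hκ, hκsum⟩ :=
      exists_isHorizontalStrip_rowLen_eq_sum hsum (T.isHorizontalStrip_sublevel N hle)
    set T' := T.restrict (T.sublevel_le N)
    have hT' (i j : ℕ) (hc : (i, j) ∈ T.sublevel N) : T' i j < N :=
      (restrict_apply T _ hc).trans_lt ((T.mem_sublevel N).1 hc).2
    obtain ⟨Ss, hSs⟩ := ih hκsum T' hT'
    -- read off the contents: `T'` has no entry `≥ N`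
    have hSs_lt (k : ι) (i j : ℕ) (hc : (i, j) ∈ κ k) : Ss k i j < N := by
      by_contra! hge
      have hzero : content T' (Ss k i j) = 0 :=
        content_eq_zero_iff.2 fun i' j' hc' => ((hT' i' j' hc').trans_le hge).ne
      rw [hSs, sum_eq_zero_iff] at hzero
      exact content_eq_zero_iff.1 (hzero k (mem_univ k)) i j hc rfl
    refine ⟨fun k => (Ss k).addStrip (hκ k) N (hSs_lt k), fun v => ?_⟩
    by_cases hv : v = N
    · have hT_top : content T N = ν.cells.card - (T.sublevel N).cells.card :=
        content_eq_card_sub_card (T.sublevel_le N) fun i j hc => by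
          rw [mem_sublevel]
          have := hle i j hc
          grind
      rw [hv, hT_top, card_cells_eq_sum_of_rowLen_eq_sum hsum,
        card_cells_eq_sum_of_rowLen_eq_sum hκsum, ← sum_tsub_distrib _
          fun k _ => card_le_card (cells_subset_iff.2 (hκ k).1)]
      exact sum_congr rfl fun k _ => (content_addStrip_self _ _ _ _).symm
    · have hT_eq : content T v = content T' v :=
        (content_restrict T _ fun i j hc hTv =>
          (T.mem_sublevel N).2 ⟨hc, lt_of_le_of_ne (hle i j hc) (hTv ▸ hv)⟩).symm
      rw [hT_eq, hSs]
      exact sum_congr rfl fun k _ => (content_addStrip_of_ne _ _ _ _ hv).symm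

/-- If `T` is a semistandard Young tableau of shape `λ⁽¹⁾ + ⋯ + λ⁽ᵗ⁾` (componentwise sum of
row lengths), then there are semistandard Young tableaux `Tⱼ` of shape `λ⁽ʲ⁾` with
`content T = Σⱼ content Tⱼ`. -/
theorem stmt_12 (t : ℕ) (lam : Fin t → YoungDiagram) (nu : YoungDiagram)
    (hsum : ∀ r : ℕ, nu.rowLen r = ∑ j, (lam j).rowLen r)
    (T : SemistandardYoungTableau nu) :
    ∃ Ts : (j : Fin t) → SemistandardYoungTableau (lam j),
      ∀ v : ℕ, content T v = ∑ j, content (Ts j) v := by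
  refine exists_content_eq_sum_of_lt ((nu.cells.sup fun c => T c.1 c.2) + 1) hsum T
    fun i j hc => Nat.lt_succ_of_le ?_
  exact le_sup (f := fun c : ℕ × ℕ => T c.1 c.2) ((YoungDiagram.mem_cells (i, j)).2 hc)
end

section
/- Let λ be a partition with at most 3 parts and total size m. An integer vector (x,y,z) with x,y,z ≥ 0 and x+y+z = m is the content vector of some semistandard Young tableau of shape λ if and only if the weakly decreasing rearrangement of (x,y,z) is dominated by λ. (Equivalently, the Schur polynomial s_λ in 3 variables has saturated Newton polytope.) -/
open Finset YoungDiagram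

namespace SemistandardYoungTableau

variable {μ : YoungDiagram}

theorem entry_add_le (T : SemistandardYoungTableau μ) {i k j : ℕ} (hik : i ≤ k)
    (hk : (k, j) ∈ μ) : T i j + (k - i) ≤ T k j := by
  induction k, hik using Nat.le_induction with
  | base => simp
  | succ k hik ih =>
    have hlt := T.col_strict k.lt_add_one hk
    have hle := ih (μ.up_left_mem k.le_succ le_rfl hk)
    omega

theorem entry_eq_row_of_mem (T : SemistandardYoungTableau μ) {n i j : ℕ}
    (hT : ∀ c ∈ μ.cells, T c.1 c.2 < n + 1) (hn : (n, j) ∈ μ) (hi : i ≤ n) : T i j = i := by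
  have hlow := T.entry_add_le (Nat.zero_le i) (μ.up_left_mem hi le_rfl hn)
  have hup := T.entry_add_le hi hn
  have hbound : T n j < n + 1 := hT (n, j) ((μ.mem_cells _).2 hn)
  omega

def ofFun (f : ℕ → ℕ → ℕ) (row_weak : ∀ {i j1 j2 : ℕ}, j1 < j2 → (i, j2) ∈ μ → f i j1 ≤ f i j2)
    (col_strict : ∀ {i1 i2 j : ℕ}, i1 < i2 → (i2, j) ∈ μ → f i1 j < f i2 j) :
    SemistandardYoungTableau μ where
  entry i j := if (i, j) ∈ μ then f i j else 0
  row_weak' hj hcell := by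
    rw [if_pos hcell, if_pos (μ.up_left_mem le_rfl hj.le hcell)]
    exact row_weak hj hcell
  col_strict' hi hcell := by
    rw [if_pos hcell, if_pos (μ.up_left_mem hi.le le_rfl hcell)]
    exact col_strict hi hcell
  zeros' hcell := if_neg hcell

theorem ofFun_apply {f : ℕ → ℕ → ℕ} (row_weak col_strict) (i j : ℕ) :
    ofFun (μ := μ) f row_weak col_strict i j = if (i, j) ∈ μ then f i j else 0 :=
  rfl

end SemistandardYoungTableau

theorem YoungDiagram.lt_of_mem_of_rowLen_eq_zero {μ : YoungDiagram} {N i j : ℕ}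
    (hN : μ.rowLen N = 0) (h : (i, j) ∈ μ) : i < N := by
  by_contra! hNi
  have := mem_iff_lt_rowLen.1 (μ.up_left_mem hNi le_rfl h)
  omega

open SemistandardYoungTableau

variable {μ : YoungDiagram}

theorem content_le_rowLen_zero (T : SemistandardYoungTableau μ) (v : ℕ) :
    content T v ≤ μ.rowLen 0 := by
  simpa [content] using card_le_card_of_injOn Prod.snd (t := range (μ.rowLen 0))
    (fun c hc => by
      have hc : c ∈ μ := (μ.mem_cells c).1 (mem_filter.1 hc).1
      exact mem_range.2 <| (mem_iff_lt_rowLen.1 hc).trans_le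
        (μ.rowLen_anti 0 c.1 c.1.zero_le))
    (by
      rintro ⟨i₁, j⟩ h₁ ⟨i₂, j'⟩ h₂ (rfl : j = j')
      simp only [coe_filter, Set.mem_ofPred_eq, YoungDiagram.mem_cells] at h₁ h₂
      rcases lt_trichotomy i₁ i₂ with h | rfl | h
      · exact absurd (T.col_strict h h₂.1) (by omega)
      · rfl
      · exact absurd (T.col_strict h h₁.1) (by omega))

theorem rowLen_le_content (T : SemistandardYoungTableau μ) {n v : ℕ}
    (hT : ∀ c ∈ μ.cells, T c.1 c.2 < n + 1) (hv : v ≤ n) : μ.rowLen n ≤ content T v := by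
  simpa [content] using card_le_card_of_injOn (Prod.mk v) (s := range (μ.rowLen n))
    (fun j hj => by
      have hn : (n, j) ∈ μ := mem_iff_lt_rowLen.2 (mem_range.1 hj)
      simpa [T.entry_eq_row_of_mem hT hn hv] using μ.up_left_mem hv le_rfl hn)
    (Prod.mk_right_injective v).injOn

theorem content_eq_sum_rows (T : SemistandardYoungTableau μ) {N : ℕ} (hN : μ.rowLen N = 0)
    (v : ℕ) : content T v = ∑ i ∈ range N, #{j ∈ range (μ.rowLen i) | T i j = v} := by
  rw [content, card_eq_sum_card_fiberwise (f := Prod.fst) (t := range N)]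
  · refine sum_congr rfl fun i _ => ?_
    rw [← card_map (s := {j ∈ range (μ.rowLen i) | T i j = v})
      ⟨Prod.mk i, Prod.mk_right_injective i⟩]
    refine congrArg card ?_
    ext ⟨i', j⟩
    simp only [mem_filter, mem_cells, mem_iff_lt_rowLen, mem_map, mem_range,
      Function.Embedding.coeFn_mk, Prod.mk.injEq, exists_eq_right_right]
    constructor <;> rintro ⟨h, rfl⟩ <;> exact ⟨h, rfl⟩
  · intro c hc
    exact mem_range.2 <| lt_of_mem_of_rowLen_eq_zero hN ((μ.mem_cells c).1 (mem_filter.1 hc).1)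

theorem content_ofFun {f : ℕ → ℕ → ℕ} (row_weak col_strict) {N : ℕ} (hN : μ.rowLen N = 0)
    (v : ℕ) :
    content (ofFun (μ := μ) f row_weak col_strict) v =
      ∑ i ∈ range N, #{j ∈ range (μ.rowLen i) | f i j = v} := by
  rw [content_eq_sum_rows _ hN]
  refine sum_congr rfl fun i _ => congrArg card (filter_congr fun j hj => ?_)
  rw [ofFun_apply, if_pos (mem_iff_lt_rowLen.2 (mem_range.1 hj))]

def stepRow (s t j : ℕ) : ℕ :=
  if j < s then 0 else if j < t then 1 else 2

theorem stepRow_mono (s t : ℕ) : Monotone (stepRow s t) := by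
  intro j₁ j₂ h
  unfold stepRow
  split_ifs <;> omega

theorem stepRow_lt_three (s t j : ℕ) : stepRow s t j < 3 := by
  unfold stepRow
  split_ifs <;> omega

theorem card_stepRow_eq_zero {s t n : ℕ} (hsn : s ≤ n) :
    #{j ∈ range n | stepRow s t j = 0} = s := by
  rw [show {j ∈ range n | stepRow s t j = 0} = range s by
    ext j; simp only [mem_filter, mem_range]; unfold stepRow; grind]
  exact card_range s

theorem card_stepRow_eq_one {s t n : ℕ} (hst : s ≤ t) (htn : t ≤ n) :
    #{j ∈ range n | stepRow s t j = 1} = t - s := by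
  rw [show {j ∈ range n | stepRow s t j = 1} = Ico s t by
    ext j; simp only [mem_filter, mem_range, mem_Ico]; unfold stepRow; grind]
  exact Nat.card_Ico s t

theorem card_stepRow_eq_two {s t n : ℕ} (hst : s ≤ t) :
    #{j ∈ range n | stepRow s t j = 2} = n - t := by
  rw [show {j ∈ range n | stepRow s t j = 2} = Ico t n by
    ext j; simp only [mem_filter, mem_range, mem_Ico]; unfold stepRow; grind]
  exact Nat.card_Ico t n

def threeRowFilling (x b a : ℕ) : ℕ → ℕ → ℕ
  | 0 => stepRow x b
  | 1 => stepRow 0 a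
  | _ => stepRow 0 0

theorem threeRowFilling_lt_three (x b a i j : ℕ) : threeRowFilling x b a i j < 3 := by
  rcases i with _ | _ | i <;> exact stepRow_lt_three _ _ _

theorem threeRowFilling_mono (x b a i : ℕ) : Monotone (threeRowFilling x b a i) := by
  rcases i with _ | _ | i <;> exact stepRow_mono _ _

theorem exists_tableau_of_content_bounds {D : YoungDiagram} (h3 : D.rowLen 3 = 0) {x y z : ℕ}
    (hsum : x + y + z = D.rowLen 0 + D.rowLen 1 + D.rowLen 2)
    (hx : D.rowLen 2 ≤ x ∧ x ≤ D.rowLen 0) (hy : D.rowLen 2 ≤ y ∧ y ≤ D.rowLen 0)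
    (hz : D.rowLen 2 ≤ z ∧ z ≤ D.rowLen 0) :
    ∃ T : SemistandardYoungTableau D, (∀ c ∈ D.cells, T c.1 c.2 < 3) ∧
      content T 0 = x ∧ content T 1 = y ∧ content T 2 = z := by
  have h01 := D.rowLen_anti 0 1 zero_le_one
  have h12 := D.rowLen_anti 1 2 one_le_two
  set a := max (D.rowLen 2) (x + y - D.rowLen 0)
  set b := x + y - a
  have ha : D.rowLen 2 ≤ a ∧ a ≤ x ∧ a ≤ D.rowLen 1 := by omega
  have hb : x ≤ b ∧ D.rowLen 1 ≤ b ∧ b ≤ D.rowLen 0 := by omega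
  have hcol : ∀ {i₁ i₂ j : ℕ}, i₁ < i₂ → (i₂, j) ∈ D →
      threeRowFilling x b a i₁ j < threeRowFilling x b a i₂ j := by
    intro i₁ i₂ j hi hcell
    have hj := mem_iff_lt_rowLen.1 hcell
    have hi₂ := lt_of_mem_of_rowLen_eq_zero h3 hcell
    interval_cases i₂ <;> interval_cases i₁ <;> simp only [threeRowFilling, stepRow] <;>
      split_ifs <;> omega
  let T := ofFun (threeRowFilling x b a) (fun hj _ => threeRowFilling_mono x b a _ hj.le) hcol
  refine ⟨T, fun c hc => ?_, ?_⟩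
  · exact (if_pos ((D.mem_cells c).1 hc)).trans_lt (threeRowFilling_lt_three x b a c.1 c.2)
  · simp (disch := omega) only [T, content_ofFun _ _ h3, sum_range_succ, sum_range_zero,
      threeRowFilling, card_stepRow_eq_zero, card_stepRow_eq_one, card_stepRow_eq_two]
    omega

theorem stmt_18_general (l1 l2 l3 m : ℕ) (hm : l1 + l2 + l3 = m)
    (x y z : ℕ) (hxyz : x + y + z = m) (D : YoungDiagram)
    (hD : ∀ r : ℕ, D.rowLen r = if r = 0 then l1 else if r = 1 then l2 else
      if r = 2 then l3 else 0) :
    (∃ T : SemistandardYoungTableau D,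
        (∀ c ∈ D.cells, T c.1 c.2 < 3) ∧
        content T 0 = x ∧ content T 1 = y ∧ content T 2 = z) ↔
      (max x (max y z) ≤ l1 ∧ m - min x (min y z) ≤ l1 + l2) := by
  have h0 : D.rowLen 0 = l1 := by simpa using hD 0
  have h1 : D.rowLen 1 = l2 := by simpa using hD 1
  have h2 : D.rowLen 2 = l3 := by simpa using hD 2
  have h3 : D.rowLen 3 = 0 := by simpa using hD 3
  constructor
  · rintro ⟨T, hT, rfl, rfl, rfl⟩
    have hbounds : ∀ v ≤ 2, l3 ≤ content T v ∧ content T v ≤ l1 := fun v hv =>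
      ⟨h2 ▸ rowLen_le_content T hT hv, h0 ▸ content_le_rowLen_zero T v⟩
    have := hbounds 0 (by norm_num)
    have := hbounds 1 (by norm_num)
    have := hbounds 2 le_rfl
    omega
  · rintro ⟨hmax, hmin⟩
    exact exists_tableau_of_content_bounds h3 (by omega) (by omega) (by omega) (by omega)

/-- Let `λ = (l1,l2,l3)` be a partition with at most 3 parts and size `m`.  A nonnegative
integer vector `(x,y,z)` with `x+y+z = m` is the content of a semistandard Young tableau of
shape `λ` with entries in `{0,1,2}` iff its weakly decreasing rearrangement is dominated by
`λ`, i.e. `max(x,y,z) ≤ l1` and `m - min(x,y,z) ≤ l1 + l2`.  (Equivalently, the Schur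
polynomial `s_λ` in 3 variables has saturated Newton polytope.) -/
theorem stmt_18 (l1 l2 l3 m : ℕ) (hl : l1 ≥ l2 ∧ l2 ≥ l3) (hm : l1 + l2 + l3 = m)
    (x y z : ℕ) (hxyz : x + y + z = m) (D : YoungDiagram)
    (hD : ∀ r : ℕ, D.rowLen r = if r = 0 then l1 else if r = 1 then l2 else
      if r = 2 then l3 else 0) :
    (∃ T : SemistandardYoungTableau D,
        (∀ c ∈ D.cells, T c.1 c.2 < 3) ∧
        content T 0 = x ∧ content T 1 = y ∧ content T 2 = z) ↔
      (max x (max y z) ≤ l1 ∧ m - min x (min y z) ≤ l1 + l2) :=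
  stmt_18_general l1 l2 l3 m hm x y z hxyz D hD
end

section
/- Let λ, μ be weakly decreasing triples with equal sums, λ₁ > μ₁, λ₃ > μ₃, and suppose λ₁ − μ₁ ≥ 2 and λ₃ − μ₃ ≥ 2. With ι = (μ₁, n−μ₁−λ₃, λ₃), the unique coefficients (a,b,c) solving γ = aλ + bμ + cι for γ = (μ₁+1, n−μ₁−λ₃, λ₃−1) are a = 1/(λ₁−μ₁), b = 1/(λ₃−μ₃), c = 1 + (λ₂−μ₂)/((λ₁−μ₁)(λ₃−μ₃)); these satisfy a + b + c = 1 and a, b, c ≥ 0. -/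
/-- Let `λ, μ` be weakly decreasing real triples of equal sum `n ≠ 0` with `λ₁ - μ₁ ≥ 2` and
`λ₃ - μ₃ ≥ 2`.  With `ι = (μ₁, n-μ₁-λ₃, λ₃)` and `γ = (μ₁+1, n-μ₁-λ₃, λ₃-1)`, the unique
coefficients `(a,b,c)` with `γ = aλ + bμ + cι` are `a = 1/(λ₁-μ₁)`, `b = 1/(λ₃-μ₃)`,
`c = 1 + (λ₂-μ₂)/((λ₁-μ₁)(λ₃-μ₃))`; they sum to `1` and are nonnegative. -/
theorem stmt_19 (l1 l2 l3 m1 m2 m3 n : ℝ)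
    (hl : l1 ≥ l2 ∧ l2 ≥ l3) (hm : m1 ≥ m2 ∧ m2 ≥ m3)
    (hln : l1 + l2 + l3 = n) (hmn : m1 + m2 + m3 = n) (hn : n ≠ 0)
    (h1 : l1 - m1 ≥ 2) (h3 : l3 - m3 ≥ 2) :
    (∀ a b c : ℝ,
        ((m1 + 1 = a * l1 + b * m1 + c * m1) ∧
            (n - m1 - l3 = a * l2 + b * m2 + c * (n - m1 - l3)) ∧
            (l3 - 1 = a * l3 + b * m3 + c * l3)) ↔
          (a = 1 / (l1 - m1) ∧ b = 1 / (l3 - m3) ∧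
            c = 1 + (l2 - m2) / ((l1 - m1) * (l3 - m3)))) ∧
      1 / (l1 - m1) + 1 / (l3 - m3) + (1 + (l2 - m2) / ((l1 - m1) * (l3 - m3))) = 1 ∧
      0 ≤ 1 / (l1 - m1) ∧ 0 ≤ 1 / (l3 - m3) ∧
      0 ≤ 1 + (l2 - m2) / ((l1 - m1) * (l3 - m3)) := by
  have hd1 : (0:ℝ) < l1 - m1 := by linarith
  have hd3 : (0:ℝ) < l3 - m3 := by linarith
  have hd1' : l1 - m1 ≠ 0 := ne_of_gt hd1
  have hd3' : l3 - m3 ≠ 0 := ne_of_gt hd3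
  have hkey : l2 - m2 = -((l1 - m1) + (l3 - m3)) := by linarith
  have hcval : 1 + (l2 - m2) / ((l1 - m1) * (l3 - m3))
      = 1 - 1 / (l1 - m1) - 1 / (l3 - m3) := by
    field_simp
    nlinarith [hkey]
  have ha2 : 1 / (l1 - m1) ≤ 1 / 2 := by
    apply one_div_le_one_div_of_le <;> linarith
  have hb2 : 1 / (l3 - m3) ≤ 1 / 2 := by
    apply one_div_le_one_div_of_le <;> linarith
  have ea : 1 / (l1 - m1) * (l1 - m1) = 1 := by field_simp
  have eb : 1 / (l3 - m3) * (l3 - m3) = 1 := by field_simp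
  refine ⟨fun a b c => ⟨fun ⟨e1, e2, e3⟩ => ?_, fun ⟨ha, hb, hc⟩ => ?_⟩, by
      rw [hcval]; ring, le_of_lt (by positivity), le_of_lt (by positivity), by
      rw [hcval]; linarith⟩
  · have hsum : (a + b + c - 1) * n = 0 := by
      linear_combination (-1) * e1 - e2 - e3 - a * hln - b * hmn
    have hsum1 : a + b + c = 1 := by
      rcases mul_eq_zero.mp hsum with h | h
      · linarith
      · exact absurd h hn
    have ha : a = 1 / (l1 - m1) := by
      rw [eq_div_iff hd1']
      linear_combination (-1) * e1 - m1 * hsum1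
    have hb : b = 1 / (l3 - m3) := by
      rw [eq_div_iff hd3']
      linear_combination e3 + l3 * hsum1
    refine ⟨ha, hb, ?_⟩
    rw [hcval]
    have hc : c = 1 - a - b := by linarith
    rw [hc, ha, hb]
  · subst ha hb hc
    rw [hcval]
    refine ⟨by linear_combination (-1) * ea, ?_, by linear_combination eb⟩
    linear_combination (-(1 / (l1 - m1))) * hln - (1 / (l3 - m3)) * hmn + ea - eb
end
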